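/- arXiv:1301.6327 — 12 statements merged into one kernel-verified Lean document; each statement's English description precedes it below -/
import Mathlib

section
/- The number of permutations of [n] all of whose left-to-right minima occur at odd positions satisfies the recurrence p_n = n·p_{n-1} for odd n and p_n = (n-1)·p_{n-1} for even n, with p_0 = 1. -/
/-- A permutation `a` of `Fin n` has all of its left-to-right minima at odd
(1-indexed) positions: whenever `a i` is `min (a 0, ..., a i)`, the position
`i+1` is odd. -/
def lrmOddPerm (n : ℕ) (a : Equiv.Perm (Fin n)) : Prop :=
  ∀ i : Fin n, (∀ j : Fin n, j ≤ i → a i ≤ a j) → Odd (i.val + 1)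

/-- `permCount n` is the number of permutations of `[n]` all of whose
left-to-right minima occur at odd positions. -/
noncomputable def permCount (n : ℕ) : ℕ :=
  Nat.card {a : Equiv.Perm (Fin n) // lrmOddPerm n a}

/-! Removing the last entry of a permutation of `[n+1]` and standardizing the rest gives a
bijection onto `[n+1] × S_n`. It preserves every left-to-right minimum before the last
position, as the standardization is order-preserving, and the last position is a
left-to-right minimum exactly when the last entry is the least value. So a good permutation
of `[n+1]` is a good permutation of `[n]` together with any last value, except that the
least value is forbidden when `n + 1` is even. -/

def IsLRMin {n : ℕ} {α : Type*} [Preorder α] (f : Fin n → α) (i : Fin n) : Prop :=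
  ∀ j, j ≤ i → f i ≤ f j

lemma isLRMin_castSucc_iff {n : ℕ} {α : Type*} [Preorder α] (f : Fin (n + 1) → α)
    (i : Fin n) : IsLRMin f i.castSucc ↔ IsLRMin (f ∘ Fin.castSucc) i := by
  simp only [IsLRMin, Fin.forall_fin_succ', Fin.castSucc_le_castSucc_iff, Function.comp_apply,
    Fin.last_le_iff, (Fin.castSucc_lt_last i).ne, false_imp_iff, and_true]

lemma isLRMin_comp_strictMono_iff {n : ℕ} {α β : Type*} [LinearOrder α] [Preorder β]
    {g : α → β} (hg : StrictMono g) (f : Fin n → α) (i : Fin n) :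
    IsLRMin (g ∘ f) i ↔ IsLRMin f i := by
  simp only [IsLRMin, Function.comp_apply, hg.le_iff_le]

lemma isLRMin_last_iff {n : ℕ} (a : Equiv.Perm (Fin (n + 1))) :
    IsLRMin a (Fin.last n) ↔ a (Fin.last n) = 0 := by
  refine ⟨fun h => Fin.le_zero_iff.mp ?_, fun h j _ => h ▸ Fin.zero_le _⟩
  simpa using h (a.symm 0) (Fin.le_last _)

/-- The permutation of `[n+1]` ending in `v` whose first `n` entries are in the relative
order given by `b`. -/
def snocPerm {n : ℕ} (v : Fin (n + 1)) (b : Equiv.Perm (Fin n)) : Equiv.Perm (Fin (n + 1)) :=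
  (finSuccEquiv' (Fin.last n)).trans (b.optionCongr.trans (finSuccEquiv' v).symm)

@[simp]
lemma snocPerm_last {n : ℕ} (v : Fin (n + 1)) (b : Equiv.Perm (Fin n)) :
    snocPerm v b (Fin.last n) = v := by
  simp [snocPerm, finSuccEquiv'_at, finSuccEquiv'_symm_none]

lemma snocPerm_comp_castSucc {n : ℕ} (v : Fin (n + 1)) (b : Equiv.Perm (Fin n)) :
    snocPerm v b ∘ Fin.castSucc = v.succAbove ∘ b := by
  ext i : 1
  have : finSuccEquiv' (Fin.last n) i.castSucc = some i := by
    rw [← Fin.succAbove_last_apply, finSuccEquiv'_succAbove]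
  simp [snocPerm, this, finSuccEquiv'_symm_some]

lemma snocPerm_castSucc {n : ℕ} (v : Fin (n + 1)) (b : Equiv.Perm (Fin n)) (i : Fin n) :
    snocPerm v b i.castSucc = v.succAbove (b i) :=
  congrFun (snocPerm_comp_castSucc v b) i

lemma snocPerm_injective (n : ℕ) :
    Function.Injective fun p : Fin (n + 1) × Equiv.Perm (Fin n) => snocPerm p.1 p.2 := by
  rintro ⟨v, b⟩ ⟨v', b'⟩ h
  obtain rfl : v = v' := by simpa using congrArg (· (Fin.last n)) h
  obtain rfl : b = b' := Equiv.ext fun i => by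
    simpa [snocPerm_castSucc] using congrArg (· i.castSucc) h
  rfl

lemma snocPerm_bijective (n : ℕ) :
    Function.Bijective fun p : Fin (n + 1) × Equiv.Perm (Fin n) => snocPerm p.1 p.2 := by
  refine (Fintype.bijective_iff_injective_and_card _).mpr ⟨snocPerm_injective n, ?_⟩
  simp [Fintype.card_perm, Nat.factorial_succ]

lemma lrmOddPerm_snocPerm_iff {n : ℕ} (v : Fin (n + 1)) (b : Equiv.Perm (Fin n)) :
    lrmOddPerm (n + 1) (snocPerm v b) ↔ (v = 0 → Odd (n + 1)) ∧ lrmOddPerm n b := by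
  change (∀ i, IsLRMin (snocPerm v b) i → _) ↔ _ ∧ ∀ i, IsLRMin b i → _
  simp only [Fin.forall_fin_succ', isLRMin_castSucc_iff, snocPerm_comp_castSucc,
    isLRMin_comp_strictMono_iff (Fin.strictMono_succAbove v), isLRMin_last_iff, snocPerm_last,
    Fin.val_castSucc, Fin.val_last]
  exact and_comm

lemma card_subtype_eq_imp {α : Type*} [Fintype α] [DecidableEq α] (a : α) (P : Prop)
    [Decidable P] :
    Nat.card {x : α // x = a → P} = if P then Fintype.card α else Fintype.card α - 1 := by
  split_ifs with hP
  · simp [hP]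
  · simp only [hP, imp_false, Nat.card_eq_fintype_card, Fintype.card_subtype_compl,
      Fintype.card_unique]

lemma permCount_succ (n : ℕ) :
    permCount (n + 1) = (if Odd (n + 1) then n + 1 else n) * permCount n := by
  have e : {v : Fin (n + 1) // v = 0 → Odd (n + 1)} × {b // lrmOddPerm n b} ≃
      {a // lrmOddPerm (n + 1) a} :=
    Equiv.subtypeProdEquivProd.symm.trans <|
      (Equiv.ofBijective _ (snocPerm_bijective n)).subtypeEquiv fun p =>
        (lrmOddPerm_snocPerm_iff p.1 p.2).symm
  rw [permCount, ← Nat.card_congr e, Nat.card_prod, card_subtype_eq_imp, Fintype.card_fin,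
    permCount]
  split_ifs <;> rfl

theorem permCount_recurrence :
    permCount 0 = 1 ∧
    ∀ n : ℕ, 1 ≤ n →
      (Odd n → permCount n = n * permCount (n - 1)) ∧
      (Even n → permCount n = (n - 1) * permCount (n - 1)) := by
  refine ⟨?_, fun n hn => ?_⟩
  · have hall (a : Equiv.Perm (Fin 0)) : lrmOddPerm 0 a := fun i => i.elim0
    rw [permCount, Nat.card_congr (Equiv.subtypeUnivEquiv hall), Nat.card_unique]
  obtain ⟨m, rfl⟩ := Nat.exists_eq_add_of_le' hn
  refine ⟨fun hodd => ?_, fun heven => ?_⟩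
  · simp [permCount_succ, hodd]
  · simp [permCount_succ, Nat.not_odd_iff_even.mpr heven]
end

section
/- The number of permutations of [n] all of whose left-to-right minima occur at odd positions equals ((n-1)!!)^2 when n is even, and equals n!!·(n-2)!! when n is odd. -/
/-- The double factorial `n!! = n (n-2) (n-4) ⋯`, with `0!! = 1!! = 1`
(and `(-1)!! = 1` via natural subtraction). -/
def dfact : ℕ → ℕ
  | 0 => 1
  | 1 => 1
  | (n + 2) => (n + 2) * dfact n

namespace LrmAux

variable {n : ℕ}

/-- Master lemma: if `a` is a permutation of `Fin (n+1)` whose restriction to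
the first `n` positions is order-isomorphic to `b`, then goodness of `a`
is equivalent to goodness of `b` together with the condition on the last value. -/
lemma key (a : Equiv.Perm (Fin (n + 1))) (b : Equiv.Perm (Fin n))
    (h : ∀ i : Fin n, a i.castSucc = (a (Fin.last n)).succAbove (b i)) :
    lrmOddPerm (n + 1) a ↔ ((Odd (n + 1) ∨ a (Fin.last n) ≠ 0) ∧ lrmOddPerm n b) := by
  constructor
  · intro ha
    constructor
    · by_contra hc
      push_neg at hc
      obtain ⟨h1, h2⟩ := hc
      have := ha (Fin.last n) (fun j _ => by rw [h2]; exact Fin.zero_le _)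
      simp only [Fin.val_last] at this
      exact h1 this
    · intro i hi
      have := ha i.castSucc ?_
      · simpa using this
      · intro j hj
        obtain ⟨j', rfl⟩ | rfl := Fin.eq_castSucc_or_eq_last j
        · rw [h, h, Fin.succAbove_le_succAbove_iff]
          exact hi j' (by simpa using hj)
        · exact absurd (lt_of_le_of_lt hj (Fin.castSucc_lt_last i)) (lt_irrefl _)
  · rintro ⟨hc, hb⟩ i hi
    obtain ⟨i', rfl⟩ | rfl := Fin.eq_castSucc_or_eq_last i
    · have hb' : ∀ j : Fin n, j ≤ i' → b i' ≤ b j := by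
        intro j hj
        have := hi j.castSucc (by simpa using hj)
        rwa [h, h, Fin.succAbove_le_succAbove_iff] at this
      simpa using hb i' hb'
    · have h0 : a (Fin.last n) = 0 := by
        have := hi (a.symm 0) (Fin.le_last _)
        rw [Equiv.apply_symm_apply] at this
        exact Fin.le_zero_iff.mp this
      rcases hc with hodd | hne
      · simpa using hodd
      · exact absurd h0 hne

/-- The permutation of `Fin n` obtained by deleting the last position of a
permutation of `Fin (n+1)` and renumbering values monotonically. -/
noncomputable def unsnoc (a : Equiv.Perm (Fin (n + 1))) : Equiv.Perm (Fin n) :=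
  Equiv.ofBijective
    (fun i => (finSuccAboveEquiv (a (Fin.last n))).symm
      ⟨a i.castSucc, a.injective.ne (Fin.castSucc_lt_last i).ne⟩)
    (Finite.injective_iff_bijective.mp (by
      intro i j hij
      have h2 := (finSuccAboveEquiv (a (Fin.last n))).symm.injective hij
      have h3 := Subtype.mk_eq_mk.mp h2
      exact Fin.castSucc_injective n (a.injective h3)))

lemma unsnoc_spec (a : Equiv.Perm (Fin (n + 1))) (i : Fin n) :
    a i.castSucc = (a (Fin.last n)).succAbove (unsnoc a i) := by
  have h : (finSuccAboveEquiv (a (Fin.last n)))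
      ((finSuccAboveEquiv (a (Fin.last n))).symm
        ⟨a i.castSucc, a.injective.ne (Fin.castSucc_lt_last i).ne⟩)
      = ⟨a i.castSucc, a.injective.ne (Fin.castSucc_lt_last i).ne⟩ :=
    Equiv.apply_symm_apply _ _
  rw [finSuccAboveEquiv_apply] at h
  have h2 := congrArg Subtype.val h
  exact h2.symm

/-- The permutation of `Fin (n+1)` obtained by appending the value `v`
after a monotone relabeling of `b`. -/
noncomputable def resnoc (v : Fin (n + 1)) (b : Equiv.Perm (Fin n)) :
    Equiv.Perm (Fin (n + 1)) :=
  Equiv.ofBijective (Fin.snoc (fun i => v.succAbove (b i)) v)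
    (Finite.injective_iff_bijective.mp (by
      intro x y hxy
      obtain ⟨x', rfl⟩ | rfl := Fin.eq_castSucc_or_eq_last x <;>
        obtain ⟨y', rfl⟩ | rfl := Fin.eq_castSucc_or_eq_last y
      · simp only [Fin.snoc_castSucc] at hxy
        rw [b.injective (Fin.succAbove_right_injective hxy)]
      · simp only [Fin.snoc_castSucc, Fin.snoc_last] at hxy
        exact absurd hxy (Fin.succAbove_ne v (b x'))
      · simp only [Fin.snoc_castSucc, Fin.snoc_last] at hxy
        exact absurd hxy.symm (Fin.succAbove_ne v (b y'))
      · rfl))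

lemma resnoc_last (v : Fin (n + 1)) (b : Equiv.Perm (Fin n)) :
    resnoc v b (Fin.last n) = v := by
  simp [resnoc]

lemma resnoc_castSucc (v : Fin (n + 1)) (b : Equiv.Perm (Fin n)) (i : Fin n) :
    resnoc v b i.castSucc = v.succAbove (b i) := by
  simp [resnoc]

/-- Forward map of the decomposition. -/
noncomputable def Fmap (x : {a : Equiv.Perm (Fin (n + 1)) // lrmOddPerm (n + 1) a}) :
    {v : Fin (n + 1) // Odd (n + 1) ∨ v ≠ 0} × {b : Equiv.Perm (Fin n) // lrmOddPerm n b} :=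
  ⟨⟨x.1 (Fin.last n), ((key x.1 (unsnoc x.1) (unsnoc_spec x.1)).mp x.2).1⟩,
   ⟨unsnoc x.1, ((key x.1 (unsnoc x.1) (unsnoc_spec x.1)).mp x.2).2⟩⟩

/-- Backward map of the decomposition. -/
noncomputable def Gmap
    (x : {v : Fin (n + 1) // Odd (n + 1) ∨ v ≠ 0} × {b : Equiv.Perm (Fin n) // lrmOddPerm n b}) :
    {a : Equiv.Perm (Fin (n + 1)) // lrmOddPerm (n + 1) a} :=
  ⟨resnoc x.1.1 x.2.1,
    (key (resnoc x.1.1 x.2.1) x.2.1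
      (fun i => by rw [resnoc_last, resnoc_castSucc])).mpr
      ⟨by rw [resnoc_last]; exact x.1.2, x.2.2⟩⟩

lemma Fmap_injective : Function.Injective (Fmap (n := n)) := by
  rintro ⟨a, ha⟩ ⟨a', ha'⟩ hxy
  have h1 : a (Fin.last n) = a' (Fin.last n) :=
    congrArg (fun z : {v : Fin (n + 1) // Odd (n + 1) ∨ v ≠ 0} ×
      {b : Equiv.Perm (Fin n) // lrmOddPerm n b} => (z.1.1 : Fin (n + 1))) hxy
  have h2 : unsnoc a = unsnoc a' :=
    congrArg (fun z : {v : Fin (n + 1) // Odd (n + 1) ∨ v ≠ 0} ×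
      {b : Equiv.Perm (Fin n) // lrmOddPerm n b} => z.2.1) hxy
  apply Subtype.ext
  apply Equiv.ext
  intro w
  obtain ⟨w', rfl⟩ | rfl := Fin.eq_castSucc_or_eq_last w
  · rw [unsnoc_spec a, unsnoc_spec a', h1, h2]
  · exact h1

lemma Gmap_injective : Function.Injective (Gmap (n := n)) := by
  rintro ⟨⟨v, hv⟩, ⟨b, hb⟩⟩ ⟨⟨v', hv'⟩, ⟨b', hb'⟩⟩ hxy
  have h : resnoc v b = resnoc v' b' := congrArg Subtype.val hxy
  have h1 : v = v' := by rw [← resnoc_last v b, h, resnoc_last]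
  have h2 : b = b' := by
    apply Equiv.ext
    intro i
    have h3 : resnoc v b i.castSucc = resnoc v' b' i.castSucc := by rw [h]
    rw [resnoc_castSucc, resnoc_castSucc, ← h1] at h3
    exact Fin.succAbove_right_injective h3
  subst h1
  subst h2
  rfl

lemma step (n : ℕ) :
    permCount (n + 1) = (if Odd (n + 1) then n + 1 else n) * permCount n := by
  classical
  have hcards : Nat.card {a : Equiv.Perm (Fin (n + 1)) // lrmOddPerm (n + 1) a}
      = Nat.card ({v : Fin (n + 1) // Odd (n + 1) ∨ v ≠ 0} ×
        {b : Equiv.Perm (Fin n) // lrmOddPerm n b}) :=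
    le_antisymm (Nat.card_le_card_of_injective _ Fmap_injective)
      (Nat.card_le_card_of_injective _ Gmap_injective)
  have hvcard : Nat.card {v : Fin (n + 1) // Odd (n + 1) ∨ v ≠ 0}
      = if Odd (n + 1) then n + 1 else n := by
    by_cases hodd : Odd (n + 1)
    · rw [if_pos hodd, Nat.card_congr (Equiv.subtypeUnivEquiv (fun v => Or.inl hodd))]
      simp
    · rw [if_neg hodd,
        Nat.card_congr ((Equiv.subtypeEquivRight (fun v => by simp [hodd])).trans
          (finSuccAboveEquiv (0 : Fin (n + 1))).symm)]
      simp
  show Nat.card {a : Equiv.Perm (Fin (n + 1)) // lrmOddPerm (n + 1) a} = _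
  rw [hcards, Nat.card_prod, hvcard]
  rfl

lemma permCount_zero : permCount 0 = 1 := by
  have h : ∀ a : Equiv.Perm (Fin 0), lrmOddPerm 0 a := fun a i => i.elim0
  show Nat.card {a : Equiv.Perm (Fin 0) // lrmOddPerm 0 a} = 1
  rw [Nat.card_congr (Equiv.subtypeUnivEquiv h), Nat.card_eq_fintype_card]
  simp

lemma dfact_odd {n : ℕ} (h : Odd n) : dfact n = n * dfact (n - 2) := by
  match n with
  | 0 => exact absurd h (by simp)
  | 1 => simp [dfact]
  | (m + 2) => rfl

end LrmAux

theorem permCount_eq_doubleFactorial (n : ℕ) :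
    (Even n → permCount n = (dfact (n - 1)) ^ 2) ∧
    (Odd n → permCount n = dfact n * dfact (n - 2)) := by
  induction n with
  | zero =>
    constructor
    · intro _
      simp [LrmAux.permCount_zero, dfact]
    · intro h
      exact absurd h (by simp)
  | succ n ih =>
    constructor
    · intro he
      have hno : Odd n := by
        simpa using Nat.Even.sub_odd (Nat.le_add_left 1 n) he odd_one
      have hnotodd : ¬ Odd (n + 1) := Nat.not_odd_iff_even.mpr he
      rw [LrmAux.step n, if_neg hnotodd, ih.2 hno, Nat.add_sub_cancel, pow_two,
        LrmAux.dfact_odd hno]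
      ring
    · intro ho
      have hne : Even n := by
        simpa using Nat.Odd.sub_odd ho odd_one
      have hd : dfact (n + 1) = (n + 1) * dfact (n - 1) := by
        cases n with
        | zero => simp [dfact]
        | succ m => rfl
      have h2 : (n + 1) - 2 = n - 1 := by omega
      rw [LrmAux.step n, if_pos ho, ih.1 hne, h2, hd]
      ring
end

section
/- The number of signed permutations of [n] all of whose left-to-right minima have positive signs equals (2n-1)!!. -/
/-- A signed permutation `(a, σ)` of `[n]` (signs as `Bool`, `true = +1`)
has all of its left-to-right minima positive: whenever `a i = min (a 0, ..., a i)`,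
the sign of the value `a i` is positive. -/
def lrmPos (n : ℕ) (a : Equiv.Perm (Fin n)) (σ : Fin n → Bool) : Prop :=
  ∀ i : Fin n, (∀ j : Fin n, j ≤ i → a i ≤ a j) → σ (a i) = true

namespace SignedPermAux

open Equiv Fin

variable {n : ℕ}

/-- Insert the maximum value `last n` at position `p`. -/
def insMax (p : Fin (n + 1)) (a' : Equiv.Perm (Fin n)) : Equiv.Perm (Fin (n + 1)) :=
  (finSuccEquiv' p).trans (a'.optionCongr.trans (finSuccEquiv' (Fin.last n)).symm)

lemma insMax_self (p : Fin (n + 1)) (a' : Equiv.Perm (Fin n)) :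
    insMax p a' p = Fin.last n := by
  simp [insMax, finSuccEquiv'_at, finSuccEquiv'_symm_none]

lemma insMax_succAbove (p : Fin (n + 1)) (a' : Equiv.Perm (Fin n)) (j : Fin n) :
    insMax p a' (p.succAbove j) = Fin.castSucc (a' j) := by
  simp [insMax, finSuccEquiv'_succAbove, finSuccEquiv'_symm_some, Fin.succAbove_last]

/-- Remove the maximum value from a permutation of `Fin (n+1)`. -/
def resMax (a : Equiv.Perm (Fin (n + 1))) : Equiv.Perm (Fin n) :=
  Equiv.removeNone ((finSuccEquiv' (a.symm (Fin.last n))).symm.trans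
    (a.trans (finSuccEquiv' (Fin.last n))))

lemma castSucc_resMax (a : Equiv.Perm (Fin (n + 1))) (j : Fin n) :
    Fin.castSucc (resMax a j) = a ((a.symm (Fin.last n)).succAbove j) := by
  set p := a.symm (Fin.last n) with hp
  set e := (finSuccEquiv' p).symm.trans (a.trans (finSuccEquiv' (Fin.last n))) with he
  have hne : a (p.succAbove j) ≠ Fin.last n := by
    intro h
    have : p.succAbove j = p := a.injective (by rw [h, hp, Equiv.apply_symm_apply])
    exact Fin.succAbove_ne p j this
  have h1 : e (some j) = some ((a (p.succAbove j)).castLT (Fin.val_lt_last hne)) := by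
    simp only [he, Equiv.trans_apply, finSuccEquiv'_symm_some]
    rw [finSuccEquiv'_last_apply hne]
  have h2 : some (Equiv.removeNone e j) = e (some j) :=
    Equiv.removeNone_some e ⟨_, h1⟩
  rw [h1] at h2
  have h3 : resMax a j = (a (p.succAbove j)).castLT (Fin.val_lt_last hne) := by
    have : Equiv.removeNone e j = resMax a j := rfl
    rw [← this]; exact Option.some_injective _ h2
  rw [h3]
  ext
  simp

lemma resMax_insMax (p : Fin (n + 1)) (a' : Equiv.Perm (Fin n)) :
    resMax (insMax p a') = a' := by
  have hp : (insMax p a').symm (Fin.last n) = p := by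
    rw [Equiv.symm_apply_eq, insMax_self]
  apply Equiv.ext
  intro j
  apply Fin.castSucc_injective
  have h := castSucc_resMax (insMax p a') j
  rw [hp] at h
  rw [h, insMax_succAbove]

lemma insMax_resMax (a : Equiv.Perm (Fin (n + 1))) :
    insMax (a.symm (Fin.last n)) (resMax a) = a := by
  set p := a.symm (Fin.last n) with hp
  ext i
  rcases eq_or_ne i p with rfl | h
  · rw [insMax_self, hp, Equiv.apply_symm_apply]
  · obtain ⟨j, rfl⟩ := Fin.exists_succAbove_eq h
    rw [insMax_succAbove, castSucc_resMax]

/-- The decomposition of a signed permutation of `[n+1]` by the position and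
sign of the maximum value. -/
def bigEquiv (n : ℕ) :
    (Equiv.Perm (Fin (n + 1)) × (Fin (n + 1) → Bool)) ≃
      ((Fin (n + 1) × Bool) × (Equiv.Perm (Fin n) × (Fin n → Bool))) where
  toFun x := ((x.1.symm (Fin.last n), x.2 (Fin.last n)),
    (resMax x.1, fun j => x.2 (Fin.castSucc j)))
  invFun y := (insMax y.1.1 y.2.1, fun v => Fin.lastCases y.1.2 y.2.2 v)
  left_inv x := by
    refine Prod.ext ?_ ?_
    · exact insMax_resMax x.1
    · funext v
      induction v using Fin.lastCases <;> simp
  right_inv y := by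
    refine Prod.ext (Prod.ext ?_ ?_) (Prod.ext ?_ ?_)
    · show (insMax y.1.1 y.2.1).symm (Fin.last n) = y.1.1
      rw [Equiv.symm_apply_eq, insMax_self]
    · simp
    · exact resMax_insMax _ _
    · funext j; simp

lemma lrmPos_iff (a : Equiv.Perm (Fin (n + 1))) (σ : Fin (n + 1) → Bool) :
    lrmPos (n + 1) a σ ↔
      ((a.symm (Fin.last n) = 0 → σ (Fin.last n) = true) ∧
        lrmPos n (resMax a) (fun j => σ (Fin.castSucc j))) := by
  set p := a.symm (Fin.last n) with hp
  have hap : a p = Fin.last n := by rw [hp, Equiv.apply_symm_apply]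
  constructor
  · intro h
    constructor
    · intro h0
      have := h 0 (fun j hj => by rw [Fin.le_zero_iff.mp hj])
      rwa [← h0, hap] at this
    · intro i' hi'
      simp only []
      rw [castSucc_resMax]
      apply h (p.succAbove i')
      intro j hj
      rcases eq_or_ne j p with rfl | hne
      · rw [hap]; exact Fin.le_last _
      · obtain ⟨j', rfl⟩ := Fin.exists_succAbove_eq hne
        rw [Fin.succAbove_le_succAbove_iff] at hj
        rw [← castSucc_resMax, ← castSucc_resMax, Fin.castSucc_le_castSucc_iff]
        exact hi' j' hj
  · rintro ⟨h0, h'⟩ i hi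
    rcases eq_or_ne i p with rfl | hne
    · have h1 : a 0 = Fin.last n := le_antisymm (Fin.le_last _)
        (hap ▸ hi 0 (Fin.zero_le _))
      have hp0 : p = 0 := a.injective (by rw [hap, h1])
      rw [hap]
      exact h0 hp0
    · obtain ⟨i', rfl⟩ := Fin.exists_succAbove_eq hne
      rw [← castSucc_resMax]
      apply h' i'
      intro j' hj'
      rw [← Fin.castSucc_le_castSucc_iff, castSucc_resMax, castSucc_resMax]
      exact hi (p.succAbove j') (Fin.succAbove_le_succAbove_iff.mpr hj')

lemma card_posSign (n : ℕ) :
    Nat.card {ps : Fin (n + 1) × Bool // ps.1 = 0 → ps.2 = true} = 2 * n + 1 := by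
  rw [Nat.card_eq_fintype_card]
  have hcompl : Fintype.card {ps : Fin (n + 1) × Bool // ¬(ps.1 = 0 → ps.2 = true)} = 1 := by
    rw [Fintype.card_eq_one_iff]
    refine ⟨⟨((0 : Fin (n + 1)), false), by simp⟩, ?_⟩
    rintro ⟨⟨p, s⟩, hps⟩
    push_neg at hps
    apply Subtype.ext
    simp only [Bool.not_eq_true] at hps
    exact Prod.ext hps.1 hps.2
  have := Fintype.card_subtype_compl (fun ps : Fin (n + 1) × Bool => ps.1 = 0 → ps.2 = true)
  rw [hcompl] at this
  have hle := Fintype.card_subtype_le (fun ps : Fin (n + 1) × Bool => ps.1 = 0 → ps.2 = true)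
  have htot : Fintype.card (Fin (n + 1) × Bool) = 2 * (n + 1) := by simp [mul_comm]
  omega

lemma step (n : ℕ) :
    Nat.card {x : Equiv.Perm (Fin (n + 1)) × (Fin (n + 1) → Bool) // lrmPos (n + 1) x.1 x.2}
      = (2 * n + 1) *
        Nat.card {x : Equiv.Perm (Fin n) × (Fin n → Bool) // lrmPos n x.1 x.2} := by
  have e1 := Equiv.subtypeEquiv (bigEquiv n)
    (q := fun y => (y.1.1 = 0 → y.1.2 = true) ∧ lrmPos n y.2.1 y.2.2)
    (fun x => lrmPos_iff x.1 x.2)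
  have e2 := Equiv.subtypeProdEquivProd
    (p := fun ps : Fin (n + 1) × Bool => ps.1 = 0 → ps.2 = true)
    (q := fun y : Equiv.Perm (Fin n) × (Fin n → Bool) => lrmPos n y.1 y.2)
  rw [Nat.card_congr (e1.trans e2), Nat.card_prod, card_posSign]

end SignedPermAux

/-- The number of signed permutations of `[n]` all of whose left-to-right
minima have positive signs is `(2n-1)!!`. -/
theorem card_signedPerms (n : ℕ) :
    Nat.card {x : Equiv.Perm (Fin n) × (Fin n → Bool) // lrmPos n x.1 x.2}
      = dfact (2 * n - 1) := by
  induction n with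
  | zero =>
      rw [Nat.card_congr (Equiv.subtypeUnivEquiv (fun x => by
        intro i; exact i.elim0))]
      simp [Nat.card_eq_fintype_card]
      rfl
  | succ m ih =>
      rw [SignedPermAux.step m, ih]
      rcases m with _ | k
      · rfl
      · have h1 : 2 * (k + 1 + 1) - 1 = (2 * (k + 1) - 1) + 2 := by omega
        have h2 : 2 * (k + 1) + 1 = (2 * (k + 1) - 1) + 2 := by omega
        rw [h1, h2, dfact]
end

section
/- There is a bijection between the set of build-tree codes of length n and the set of signed permutations of [n] all of whose left-to-right minima have positive signs. -/
/-- Build-tree codes of length `n`. -/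
def IsBTC (n : ℕ) (c : Fin n → ℕ × Bool) : Prop :=
  ∀ i : Fin n, (c i).1 ≤ i.val ∧ c i ≠ (0, false)

namespace BTCproof

open Equiv Fin

/-- Insert the maximal value `last n` at position `p`, shifting the rest. -/
def insPerm {n : ℕ} (p : Fin (n + 1)) (a : Equiv.Perm (Fin n)) : Equiv.Perm (Fin (n + 1)) :=
  (finSuccEquiv' p).trans (a.optionCongr.trans (finSuccEquiv' (Fin.last n)).symm)

@[simp] lemma insPerm_self {n : ℕ} (p : Fin (n + 1)) (a : Equiv.Perm (Fin n)) :
    insPerm p a p = Fin.last n := by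
  simp [insPerm]

@[simp] lemma insPerm_succAbove {n : ℕ} (p : Fin (n + 1)) (a : Equiv.Perm (Fin n))
    (j : Fin n) : insPerm p a (p.succAbove j) = (a j).castSucc := by
  simp [insPerm]

lemma insPerm_ne_last {n : ℕ} (p : Fin (n + 1)) (a : Equiv.Perm (Fin n)) {i : Fin (n + 1)}
    (h : i ≠ p) : insPerm p a i ≠ Fin.last n := by
  intro hl
  exact h ((insPerm p a).injective (by rw [hl, insPerm_self]))

lemma del_ne_last {n : ℕ} (b : Equiv.Perm (Fin (n + 1))) (j : Fin n) :
    b ((b.symm (Fin.last n)).succAbove j) ≠ Fin.last n := by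
  intro hl
  have := b.injective (hl.trans (b.apply_symm_apply (Fin.last n)).symm)
  exact Fin.succAbove_ne _ j this

/-- The small permutation obtained by deleting the value `last n` from `b`. -/
noncomputable def delPerm {n : ℕ} (b : Equiv.Perm (Fin (n + 1))) : Equiv.Perm (Fin n) := by
  refine Equiv.ofBijective
    (fun j => (b ((b.symm (Fin.last n)).succAbove j)).castPred (del_ne_last b j)) ?_
  refine Finite.injective_iff_bijective.mp fun j₁ j₂ h => ?_
  have h2 : b ((b.symm (Fin.last n)).succAbove j₁) = b ((b.symm (Fin.last n)).succAbove j₂) := by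
    rw [← Fin.castSucc_castPred (b ((b.symm (Fin.last n)).succAbove j₁)) (del_ne_last b j₁),
      ← Fin.castSucc_castPred (b ((b.symm (Fin.last n)).succAbove j₂)) (del_ne_last b j₂), h]
  exact Fin.succAbove_right_injective (b.injective h2)

lemma insPerm_delPerm {n : ℕ} (b : Equiv.Perm (Fin (n + 1))) :
    insPerm (b.symm (Fin.last n)) (delPerm b) = b := by
  apply Equiv.ext
  intro i
  rcases eq_or_ne i (b.symm (Fin.last n)) with rfl | h
  · rw [insPerm_self, b.apply_symm_apply]
  · obtain ⟨j, rfl⟩ := Fin.exists_succAbove_eq h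
    rw [insPerm_succAbove]
    show ((b ((b.symm (Fin.last n)).succAbove j)).castPred (del_ne_last b j)).castSucc = _
    rw [Fin.castSucc_castPred]

/-- Prefix-minimum characterization at the inserted position. -/
lemma ins_min_at_p {n : ℕ} (p : Fin (n + 1)) (a : Equiv.Perm (Fin n)) :
    (∀ j, j ≤ p → insPerm p a p ≤ insPerm p a j) ↔ p = 0 := by
  constructor
  · intro h
    by_contra hp
    have h0 : (0 : Fin (n + 1)) ≤ p := Fin.zero_le p
    have := h 0 h0
    rw [insPerm_self] at this
    have h0l : insPerm p a 0 = Fin.last n := le_antisymm (Fin.le_last _) this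
    exact hp (((insPerm p a).injective (by rw [h0l, insPerm_self])).symm)
  · rintro rfl j hj
    rw [Fin.le_zero_iff] at hj
    subst hj
    exact le_refl _

lemma ins_min_at_succAbove {n : ℕ} (p : Fin (n + 1)) (a : Equiv.Perm (Fin n)) (k : Fin n) :
    (∀ j, j ≤ p.succAbove k → insPerm p a (p.succAbove k) ≤ insPerm p a j) ↔
      (∀ m, m ≤ k → a k ≤ a m) := by
  constructor
  · intro h m hm
    have := h (p.succAbove m) (Fin.succAbove_le_succAbove_iff.mpr hm)
    rw [insPerm_succAbove, insPerm_succAbove] at this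
    exact Fin.castSucc_le_castSucc_iff.mp this
  · intro h j hj
    rcases eq_or_ne j p with rfl | hjp
    · rw [insPerm_self]
      exact Fin.le_last _
    · obtain ⟨m, rfl⟩ := Fin.exists_succAbove_eq hjp
      rw [insPerm_succAbove, insPerm_succAbove]
      exact Fin.castSucc_le_castSucc_iff.mpr (h m (Fin.succAbove_le_succAbove_iff.mp hj))

/-- The key combinatorial lemma: `lrmPos` of the inserted signed permutation. -/
lemma lrmPos_ins_iff {n : ℕ} (p : Fin (n + 1)) (s : Bool) (a : Equiv.Perm (Fin n))
    (σ : Fin n → Bool) :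
    lrmPos (n + 1) (insPerm p a) (Fin.lastCases s σ) ↔
      (lrmPos n a σ ∧ (p = 0 → s = true)) := by
  constructor
  · intro h
    constructor
    · intro k hk
      simpa using h (p.succAbove k) ((ins_min_at_succAbove p a k).mpr hk)
    · intro hp
      simpa using h p ((ins_min_at_p p a).mpr hp)
  · rintro ⟨h1, h2⟩ i hi
    rcases eq_or_ne i p with rfl | hip
    · simpa using h2 ((ins_min_at_p i a).mp hi)
    · obtain ⟨k, rfl⟩ := Fin.exists_succAbove_eq hip
      simpa using h1 k ((ins_min_at_succAbove p a k).mp hi)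

/-- The set of allowed new entries. -/
abbrev C (n : ℕ) := {y : Fin (n + 1) × Bool // y ≠ ((0 : Fin (n + 1)), false)}

/-- Step equivalence on the signed-permutation side. -/
noncomputable def spStep (n : ℕ) :
    C n × {x : Equiv.Perm (Fin n) × (Fin n → Bool) // lrmPos n x.1 x.2} ≃
      {x : Equiv.Perm (Fin (n + 1)) × (Fin (n + 1) → Bool) // lrmPos (n + 1) x.1 x.2} := by
  refine Equiv.ofBijective
    (fun x => ⟨(insPerm x.1.1.1 x.2.1.1, Fin.lastCases x.1.1.2 x.2.1.2), ?_⟩) ⟨?_, ?_⟩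
  · refine (lrmPos_ins_iff _ _ _ _).mpr ⟨x.2.2, fun hp => ?_⟩
    rcases x with ⟨⟨⟨p, s⟩, hps⟩, ⟨⟨a, σ⟩, h⟩⟩
    simp only at hp ⊢
    subst hp
    cases s with
    | true => rfl
    | false => exact absurd rfl hps
  · rintro ⟨⟨⟨p, s⟩, hps⟩, ⟨⟨a, σ⟩, h⟩⟩ ⟨⟨⟨q, t⟩, hqt⟩, ⟨⟨b, τ⟩, h'⟩⟩ heq
    simp only [Subtype.mk.injEq, Prod.mk.injEq] at heq
    obtain ⟨he, hf⟩ := heq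
    have hs1 : (insPerm p a).symm (Fin.last n) = p :=
      (Equiv.symm_apply_eq _).mpr (insPerm_self p a).symm
    have hs2 : (insPerm q b).symm (Fin.last n) = q :=
      (Equiv.symm_apply_eq _).mpr (insPerm_self q b).symm
    have hpq : p = q := by rw [← hs1, ← hs2, he]
    subst hpq
    have hab : a = b := by
      apply Equiv.ext
      intro j
      have := congrArg (fun e : Equiv.Perm (Fin (n+1)) => e (p.succAbove j)) he
      simp only [insPerm_succAbove] at this
      exact Fin.castSucc_injective n this
    have hst : s = t := by
      have := congrFun hf (Fin.last n)
      simpa using this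
    have hστ : σ = τ := by
      funext j
      have := congrFun hf j.castSucc
      simpa using this
    simp [hab, hst, hστ]
  · rintro ⟨⟨b, τ⟩, hb⟩
    set p := b.symm (Fin.last n) with hp
    have hins : insPerm p (delPerm b) = b := insPerm_delPerm b
    have hkey : lrmPos (n + 1) (insPerm p (delPerm b))
        (Fin.lastCases (τ (Fin.last n)) (fun j => τ j.castSucc)) := by
      rw [hins]
      intro i hi
      have : (Fin.lastCases (τ (Fin.last n)) (fun j => τ j.castSucc) : Fin (n+1) → Bool)
          = τ := by
        funext i
        induction i using Fin.lastCases with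
        | last => simp
        | cast j => simp
      rw [this]
      exact hb i hi
    have hiff := (lrmPos_ins_iff p (τ (Fin.last n)) (delPerm b)
      (fun j => τ j.castSucc)).mp hkey
    refine ⟨⟨⟨(p, τ (Fin.last n)), ?_⟩, ⟨(delPerm b, fun j => τ j.castSucc), hiff.1⟩⟩, ?_⟩
    · intro hc
      have hp0 : p = 0 := congrArg Prod.fst hc
      have := hiff.2 hp0
      have : (false : Bool) = true := by
        rw [← this]
        exact (congrArg Prod.snd hc).symm
      exact Bool.false_ne_true this
    · apply Subtype.ext
      simp only
      refine Prod.ext hins ?_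
      funext i
      induction i using Fin.lastCases with
      | last => simp
      | cast j => simp

/-- Step equivalence on the code side. -/
def btcStep (n : ℕ) :
    {c : Fin (n + 1) → ℕ × Bool // IsBTC (n + 1) c} ≃
      C n × {c : Fin n → ℕ × Bool // IsBTC n c} where
  toFun c :=
    ⟨⟨(⟨(c.1 (Fin.last n)).1, Nat.lt_succ_of_le (c.2 (Fin.last n)).1⟩, (c.1 (Fin.last n)).2), by
        intro hc
        apply (c.2 (Fin.last n)).2
        have h1 : (c.1 (Fin.last n)).1 = 0 := by
          have := congrArg Prod.fst hc
          simpa [Fin.ext_iff] using this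
        have h2 : (c.1 (Fin.last n)).2 = false := congrArg Prod.snd hc
        exact Prod.ext h1 h2⟩,
     ⟨fun i => c.1 i.castSucc, by
        intro i
        refine ⟨(c.2 i.castSucc).1, (c.2 i.castSucc).2⟩⟩⟩
  invFun x :=
    ⟨Fin.lastCases ((x.1.1.1.val : ℕ), x.1.1.2) x.2.1, by
      intro i
      induction i using Fin.lastCases with
      | last =>
        refine ⟨by simpa using Nat.lt_succ_iff.mp x.1.1.1.isLt, ?_⟩
        simp only [Fin.lastCases_last]
        intro hc
        apply x.1.2
        have h1 : x.1.1.1 = 0 := Fin.ext (by simpa using congrArg Prod.fst hc)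
        have h2 : x.1.1.2 = false := congrArg Prod.snd hc
        exact Prod.ext h1 h2
      | cast j =>
        simp only [Fin.lastCases_castSucc]
        exact ⟨(x.2.2 j).1, (x.2.2 j).2⟩⟩
  left_inv c := by
    apply Subtype.ext
    funext i
    induction i using Fin.lastCases with
    | last => simp
    | cast j => simp
  right_inv x := by
    rcases x with ⟨⟨⟨p, s⟩, hps⟩, ⟨c, hc⟩⟩
    refine Prod.ext (Subtype.ext ?_) (Subtype.ext ?_)
    · simp
    · funext j
      simp

theorem main (n : ℕ) :
    Nonempty ({c : Fin n → ℕ × Bool // IsBTC n c} ≃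
      {x : Equiv.Perm (Fin n) × (Fin n → Bool) // lrmPos n x.1 x.2}) := by
  induction n with
  | zero =>
    refine ⟨⟨fun _ => ⟨(1, fun i => true), fun i => i.elim0⟩,
      fun _ => ⟨fun i => i.elim0, fun i => i.elim0⟩, ?_, ?_⟩⟩
    · intro c
      apply Subtype.ext
      funext i
      exact i.elim0
    · intro x
      apply Subtype.ext
      refine Prod.ext ?_ ?_
      · apply Equiv.ext; intro i; exact i.elim0
      · funext i; exact i.elim0
  | succ n ih =>
    obtain ⟨e⟩ := ih
    exact ⟨((btcStep n).trans ((Equiv.refl (C n)).prodCongr e)).trans (spStep n)⟩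

end BTCproof

/-- There is a bijection between build-tree codes of length `n` and signed
permutations of `[n]` all of whose left-to-right minima have positive signs. -/
theorem btc_equiv_signedPerms (n : ℕ) :
    Nonempty ({c : Fin n → ℕ × Bool // IsBTC n c} ≃
      {x : Equiv.Perm (Fin n) × (Fin n → Bool) // lrmPos n x.1 x.2}) :=
  BTCproof.main n
end

section
/- The set of ordered partitions of [n] all of whose left-to-right minima occur at odd locations is in bijection with the set of signed permutations of [n] with decreasing blocks all of whose left-to-right minima have positive signs. The bijection sends (A_1,...,A_k) to the permutation obtained by listing the elements of each A_i in decreasing order and concatenating, where all elements of A_i receive sign (-1)^{i-1}. -/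
/-- The union `A₁ ∪ ⋯ ∪ A_{i+1}` of the first `i+1` blocks (0-indexed `i`). -/
def prefixUnion (n : ℕ) (L : List (Finset (Fin n))) (i : ℕ) : Finset (Fin n) :=
  (L.take (i + 1)).foldr (· ∪ ·) ∅

/-- `L` is an ordered partition of `[n]`: a sequence of disjoint nonempty
subsets whose union is `[n]`. -/
def IsOP (n : ℕ) (L : List (Finset (Fin n))) : Prop :=
  (∀ A ∈ L, A.Nonempty) ∧ L.Pairwise Disjoint ∧ L.foldr (· ∪ ·) ∅ = Finset.univ

/-- All left-to-right minima of the ordered partition `L` occur at odd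
(1-indexed) locations: for each `i`, the minimum `m` of `A₁ ∪ ⋯ ∪ A_{i+1}`
lies in a block of even 0-index (odd 1-index). -/
def OddMinima (n : ℕ) (L : List (Finset (Fin n))) : Prop :=
  ∀ i, i < L.length → ∀ m : Fin n,
    (m ∈ prefixUnion n L i ∧ ∀ x ∈ prefixUnion n L i, m ≤ x) →
    ∃ j, ∃ hj : j < L.length, Even j ∧ m ∈ L.get ⟨j, hj⟩

/-- A signed permutation of `[n]`, presented as a list of (value, sign) pairs. -/
def IsSP (n : ℕ) (l : List (Fin n × Bool)) : Prop :=
  l.length = n ∧ (l.map Prod.fst).Nodup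

/-- Decreasing blocks: adjacent entries with the same sign are decreasing. -/
def DecBlocks (n : ℕ) (l : List (Fin n × Bool)) : Prop :=
  ∀ i, (h : i + 1 < l.length) →
    (l[i]'(Nat.lt_of_succ_lt h)).2 = (l[i + 1]'h).2 →
    (l[i + 1]'h).1 < (l[i]'(Nat.lt_of_succ_lt h)).1

/-- All left-to-right minima of the signed permutation `l` have positive sign:
for each `i`, the minimum `m` of the first `i+1` values carries sign `+`. -/
def MinPosL (n : ℕ) (l : List (Fin n × Bool)) : Prop :=
  ∀ i, i < l.length → ∀ m : Fin n,
    (m ∈ (l.take (i + 1)).map Prod.fst ∧ ∀ x ∈ (l.take (i + 1)).map Prod.fst, m ≤ x) →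
    (m, true) ∈ l

/-- The map sending an ordered partition `(A₁,…,A_k)` to the signed permutation
obtained by listing the elements of each `Aᵢ` in decreasing order and
concatenating, all elements of `Aᵢ` receiving sign `(-1)^{i-1}` (positive for
odd 1-indexed, i.e. even 0-indexed, blocks). -/
def opToSigned (n : ℕ) (L : List (Finset (Fin n))) : List (Fin n × Bool) :=
  (L.zipIdx.map fun p => ((p.1.sort (· ≤ ·)).reverse.map fun v => (v, p.2 % 2 == 0))).flatten

/-
The inverse cuts a signed permutation into its maximal runs of constant sign (`List.splitBy`).
Decreasing blocks make each run the decreasing listing of its set of values, and since the first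
entry is a left-to-right minimum, hence positive, the signs of the runs alternate starting with
`+`, as in `opToSigned`.

Both minima conditions are equivalent to `EvenRecordBlocks`: every block containing an element
smaller than all elements of the earlier blocks has even 0-based index. On the permutation side,
because blocks are listed in decreasing order, the left-to-right minima are exactly these
elements; on the partition side, the minimum of `A₁ ∪ ⋯ ∪ Aᵢ` lies in `Aᵢ` iff `Aᵢ` contains such
an element.
-/

namespace Finset

variable {α : Type*} [LinearOrder α]

def sortDesc (s : Finset α) : List α := (s.sort (· ≤ ·)).reverse

@[simp] theorem mem_sortDesc {s : Finset α} {a : α} : a ∈ s.sortDesc ↔ a ∈ s := by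
  simp [sortDesc]

@[simp] theorem toFinset_sortDesc (s : Finset α) : s.sortDesc.toFinset = s := by
  simp [sortDesc]

theorem pairwise_gt_sortDesc (s : Finset α) : s.sortDesc.Pairwise (· > ·) := by
  rw [sortDesc, List.pairwise_reverse]
  exact (sortedLT_sort s).pairwise

theorem nodup_sortDesc (s : Finset α) : s.sortDesc.Nodup :=
  (pairwise_gt_sortDesc s).imp ne_of_gt

theorem sortDesc_ne_nil {s : Finset α} (hs : s.Nonempty) : s.sortDesc ≠ [] := by
  obtain ⟨a, ha⟩ := hs
  exact List.ne_nil_of_mem (mem_sortDesc.2 ha)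

end Finset

theorem Nat.add_one_mod_two_beq_zero (i : ℕ) : ((i + 1) % 2 == 0) = !(i % 2 == 0) := by
  rcases Nat.mod_two_eq_zero_or_one i with h | h <;> simp [Nat.add_mod, h]

namespace List

variable {α β : Type*}

theorem sortDesc_toFinset [LinearOrder α] {l : List α} (hl : l.Pairwise (· > ·)) :
    l.toFinset.sortDesc = l := by
  have hrev : l.reverse.Pairwise (· ≤ ·) := pairwise_reverse.2 (hl.imp le_of_lt)
  rw [Finset.sortDesc, ← toFinset_reverse,
    (toFinset_sort _ (nodup_reverse.2 (hl.imp ne_of_gt))).2 hrev, reverse_reverse]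

theorem map_sortDesc_toFinset_map_fst [LinearOrder α] {r : List (α × β)} {b : β}
    (hr : (r.map Prod.fst).Pairwise (· > ·)) (hb : ∀ a ∈ r, a.2 = b) :
    (r.map Prod.fst).toFinset.sortDesc.map (·, b) = r := by
  rw [sortDesc_toFinset hr, map_map]
  conv_rhs => rw [← map_id r]
  exact map_congr_left fun a ha => by simp [← hb a ha]

theorem mem_foldr_union [DecidableEq α] {L : List (Finset α)} {a : α} :
    a ∈ L.foldr (· ∪ ·) ∅ ↔ ∃ A ∈ L, a ∈ A := by
  induction L with
  | nil => simp
  | cons A L ih => simp [ih]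

theorem Pairwise.eq_of_mem_getElem {L : List (Finset α)} (hL : L.Pairwise _root_.Disjoint)
    {i j : ℕ} (hi : i < L.length) (hj : j < L.length) {a : α} (hai : a ∈ L[i])
    (haj : a ∈ L[j]) : i = j := by
  by_contra hij
  rcases Nat.lt_or_gt_of_ne hij with h | h
  · exact Finset.disjoint_left.1 (pairwise_iff_getElem.1 hL i j hi hj h) hai haj
  · exact Finset.disjoint_left.1 (pairwise_iff_getElem.1 hL j i hj hi h) haj hai

theorem exists_mem_getElem_of_flatten_eq_append_cons {L : List (List α)} {p q : List α} {a : α}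
    (h : L.flatten = p ++ a :: q) :
    ∃ t, ∃ ht : t < L.length, a ∈ L[t] ∧ ∀ s (hs : s < t), ∀ b ∈ L[s], b ∈ p := by
  obtain ⟨as, bs, cs, ds, rfl, rfl⟩ :
      ∃ as bs cs ds, L = as ++ (bs ++ a :: cs) :: ds ∧ p = as.flatten ++ bs := by
    rcases flatten_eq_append_iff.1 h with
      ⟨as, bs, rfl, rfl, h'⟩ | ⟨as, bs, c, cs, ds, rfl, rfl, h'⟩
    · obtain ⟨as', bs', cs', rfl, hnil, -⟩ := cons_eq_flatten_iff.1 h'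
      exact ⟨as ++ as', [], bs', cs', by simp, by simp [flatten_eq_nil_iff.2 hnil]⟩
    · obtain ⟨rfl, -⟩ := cons.inj h'
      exact ⟨as, bs, cs, ds, rfl, rfl⟩
  refine ⟨as.length, by simp, by simp, fun s hs b hb => ?_⟩
  rw [getElem_append_left hs] at hb
  exact mem_append_left _ (mem_flatten_of_mem (getElem_mem hs) hb)

theorem flatten_eq_of_getElem_eq_append_cons {L : List (List α)} {t : ℕ} (ht : t < L.length)
    {bs cs : List α} {a : α} (h : L[t] = bs ++ a :: cs) :
    L.flatten = ((L.take t).flatten ++ bs) ++ a :: (cs ++ (L.drop (t + 1)).flatten) := by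
  conv_lhs => rw [← take_append_drop t L, ← getElem_cons_drop ht, h]
  simp

theorem eq_of_mem_splitBy_beq [BEq β] [LawfulBEq β] {f : α → β} {l r : List α}
    (hr : r ∈ l.splitBy fun a b => f a == f b) {a b : α} (ha : a ∈ r) (hb : b ∈ r) :
    f a = f b := by
  have hne := ne_nil_of_mem_splitBy hr
  have key := IsChain.induction (fun x => f x = f (r.head hne)) r (isChain_of_mem_splitBy hr)
    (fun _ _ hxy hx => (beq_iff_eq.1 hxy).symm.trans hx) (fun _ => rfl)
  rw [key a ha, key b hb]

theorem apply_eq_of_mem_getElem_splitBy {f : α → Bool} {l : List α}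
    (hhead : ∀ a ∈ l.head?, f a = true) :
    ∀ i (hi : i < (l.splitBy fun a b => f a == f b).length),
      ∀ a ∈ (l.splitBy fun a b => f a == f b)[i], f a = (i % 2 == 0) := by
  intro i
  induction i with
  | zero =>
    intro hi a ha
    have hl : l ≠ [] := by rintro rfl; simp at hi
    have hmem := getElem_mem hi
    rw [eq_of_mem_splitBy_beq hmem ha (head_mem (ne_nil_of_mem_splitBy hmem))]
    simpa [getElem_zero_eq_head, head_head_splitBy _ hl] using hhead _ (head_mem_head? hl)
  | succ i ih =>
    intro hi a ha
    obtain ⟨hne, hne', hdiff⟩ := isChain_iff_getElem.1 (isChain_getLast_head_splitBy _ l) i hi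
    rw [ih (by omega) _ (getLast_mem hne)] at hdiff
    rw [eq_of_mem_splitBy_beq (getElem_mem hi) ha (head_mem hne'), Nat.add_one_mod_two_beq_zero]
    revert hdiff
    cases i % 2 == 0 <;> simp

end List

section

variable {n : ℕ}

def signedBlocks (L : List (Finset (Fin n))) : List (List (Fin n × Bool)) :=
  L.zipIdx.map fun p => p.1.sortDesc.map fun v => (v, p.2 % 2 == 0)

def signedToOp (l : List (Fin n × Bool)) : List (Finset (Fin n)) :=
  (l.splitBy fun a b => a.2 == b.2).map fun r => (r.map Prod.fst).toFinset

def PosRecords (l : List (Fin n × Bool)) : Prop :=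
  ∀ p a q, l = p ++ a :: q → (∀ b ∈ p, a.1 < b.1) → a.2 = true

def EvenRecordBlocks (L : List (Finset (Fin n))) : Prop :=
  ∀ t (ht : t < L.length), ∀ x ∈ L[t], (∀ s (hs : s < t), ∀ y ∈ L[s], x < y) → Even t

theorem opToSigned_eq_flatten (L : List (Finset (Fin n))) :
    opToSigned n L = (signedBlocks L).flatten :=
  rfl

@[simp] theorem length_signedBlocks (L : List (Finset (Fin n))) :
    (signedBlocks L).length = L.length := by
  simp [signedBlocks]

theorem getElem_signedBlocks {L : List (Finset (Fin n))} {i : ℕ}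
    (hi : i < (signedBlocks L).length) :
    (signedBlocks L)[i] = (L[i]'(by simpa using hi)).sortDesc.map fun v => (v, i % 2 == 0) := by
  simp [signedBlocks]

theorem mem_getElem_signedBlocks {L : List (Finset (Fin n))} {i : ℕ}
    (hi : i < (signedBlocks L).length) {a : Fin n × Bool} :
    a ∈ (signedBlocks L)[i] ↔ a.1 ∈ L[i]'(by simpa using hi) ∧ a.2 = (i % 2 == 0) := by
  simp [getElem_signedBlocks, Prod.ext_iff, eq_comm]

theorem nil_notMem_signedBlocks {L : List (Finset (Fin n))} (hne : ∀ A ∈ L, A.Nonempty) :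
    [] ∉ signedBlocks L := by
  simp only [signedBlocks, List.mem_map, not_exists, not_and]
  intro p hp h
  exact Finset.sortDesc_ne_nil (hne p.1 (List.fst_mem_of_mem_zipIdx hp)) (List.map_eq_nil_iff.1 h)

theorem isChain_signedBlocks (L : List (Finset (Fin n))) :
    (signedBlocks L).IsChain fun B C => ∀ a ∈ B, ∀ b ∈ C, a.2 ≠ b.2 := by
  rw [List.isChain_iff_getElem]
  intro i hi a ha b hb
  rw [mem_getElem_signedBlocks] at ha hb
  rw [ha.2, hb.2, Nat.add_one_mod_two_beq_zero]
  cases i % 2 == 0 <;> simp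

theorem map_fst_opToSigned (L : List (Finset (Fin n))) :
    (opToSigned n L).map Prod.fst = (L.map Finset.sortDesc).flatten := by
  simp only [opToSigned_eq_flatten, signedBlocks, List.map_flatten, List.map_map]
  conv_rhs => rw [← List.zipIdx_map_fst 0 L, List.map_map]
  congr 2
  funext p
  simp [Function.comp_def]

theorem isOP_iff {L : List (Finset (Fin n))} :
    IsOP n L ↔ (∀ A ∈ L, A.Nonempty) ∧ IsSP n (opToSigned n L) := by
  have hnodup : ((L.map Finset.sortDesc).flatten).Nodup ↔ L.Pairwise Disjoint := by
    simp only [List.nodup_flatten, List.pairwise_map, List.mem_map, forall_exists_index, and_imp,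
      forall_apply_eq_imp_iff₂, Finset.nodup_sortDesc, implies_true, true_and,
      ← List.disjoint_toFinset_iff_disjoint, Finset.toFinset_sortDesc]
  have hunion : ((L.map Finset.sortDesc).flatten).toFinset = L.foldr (· ∪ ·) ∅ := by
    ext x
    simp [List.mem_foldr_union]
  rw [IsOP, IsSP, ← List.length_map Prod.fst, map_fst_opToSigned, hnodup]
  constructor
  · rintro ⟨hne, hd, hu⟩
    refine ⟨hne, ?_, hd⟩
    rw [← List.toFinset_card_of_nodup (hnodup.2 hd), hunion, hu, Finset.card_univ,
      Fintype.card_fin]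
  · rintro ⟨hne, hlen, hd⟩
    refine ⟨hne, hd, ?_⟩
    rw [← Finset.card_eq_iff_eq_univ, ← hunion, List.toFinset_card_of_nodup (hnodup.2 hd), hlen,
      Fintype.card_fin]

theorem decBlocks_iff_isChain {l : List (Fin n × Bool)} :
    DecBlocks n l ↔ l.IsChain fun a b => a.2 = b.2 → b.1 < a.1 := by
  rw [List.isChain_iff_getElem]
  rfl

theorem decBlocks_opToSigned {L : List (Finset (Fin n))} (hne : ∀ A ∈ L, A.Nonempty) :
    DecBlocks n (opToSigned n L) := by
  rw [decBlocks_iff_isChain, opToSigned_eq_flatten,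
    List.isChain_flatten (nil_notMem_signedBlocks hne)]
  refine ⟨?_, (isChain_signedBlocks L).imp fun B C h a ha b hb hab =>
    absurd hab (h a (List.mem_of_mem_getLast? ha) b (List.mem_of_mem_head? hb))⟩
  simp only [signedBlocks, List.mem_map]
  rintro _ ⟨p, -, rfl⟩
  rw [List.isChain_map]
  exact (p.1.pairwise_gt_sortDesc).isChain.imp fun _ _ h _ => h

theorem splitBy_opToSigned {L : List (Finset (Fin n))} (hne : ∀ A ∈ L, A.Nonempty) :
    (opToSigned n L).splitBy (fun a b => a.2 == b.2) = signedBlocks L := by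
  have hnil := nil_notMem_signedBlocks hne
  refine List.splitBy_flatten hnil ?_ ?_
  · simp only [List.mem_map]
    rintro _ ⟨p, -, rfl⟩
    rw [List.isChain_map]
    exact List.Pairwise.isChain (List.pairwise_of_forall fun _ _ => by simp)
  · refine (isChain_signedBlocks L).imp_of_mem_imp fun B C hB hC h =>
      ⟨fun h' => hnil (h' ▸ hB), fun h' => hnil (h' ▸ hC), ?_⟩
    simpa using h _ (List.getLast_mem _) _ (List.head_mem _)

theorem signedToOp_opToSigned {L : List (Finset (Fin n))} (hne : ∀ A ∈ L, A.Nonempty) :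
    signedToOp (opToSigned n L) = L := by
  rw [signedToOp, splitBy_opToSigned hne]
  simp [signedBlocks, Function.comp_def]

theorem nonempty_of_mem_signedToOp {l : List (Fin n × Bool)} {A : Finset (Fin n)}
    (hA : A ∈ signedToOp l) : A.Nonempty := by
  obtain ⟨r, hr, rfl⟩ := List.mem_map.1 hA
  simpa using List.ne_nil_of_mem_splitBy hr

theorem pairwise_gt_of_mem_splitBy {l r : List (Fin n × Bool)} (hdec : DecBlocks n l)
    (hr : r ∈ l.splitBy fun a b => a.2 == b.2) : (r.map Prod.fst).Pairwise (· > ·) := by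
  have hchain := (decBlocks_iff_isChain.1 hdec).infix
    ((List.flatten_splitBy _ l) ▸ List.infix_of_mem_flatten hr)
  rw [← List.isChain_iff_pairwise, List.isChain_map]
  exact hchain.imp_of_mem_imp fun a b ha hb h =>
    h (List.eq_of_mem_splitBy_beq (f := Prod.snd) hr ha hb)

theorem signedBlocks_signedToOp {l : List (Fin n × Bool)} (hdec : DecBlocks n l)
    (hhead : ∀ a ∈ l.head?, a.2 = true) :
    signedBlocks (signedToOp l) = l.splitBy fun a b => a.2 == b.2 := by
  refine List.ext_getElem (by simp [signedToOp]) fun i h₁ h₂ => ?_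
  simp only [getElem_signedBlocks, signedToOp, List.getElem_map]
  exact List.map_sortDesc_toFinset_map_fst (pairwise_gt_of_mem_splitBy hdec (List.getElem_mem h₂))
    (List.apply_eq_of_mem_getElem_splitBy (f := Prod.snd) hhead i h₂)

theorem opToSigned_signedToOp {l : List (Fin n × Bool)} (hdec : DecBlocks n l)
    (hhead : ∀ a ∈ l.head?, a.2 = true) : opToSigned n (signedToOp l) = l := by
  rw [opToSigned_eq_flatten, signedBlocks_signedToOp hdec hhead, List.flatten_splitBy]

theorem mem_prefixUnion {L : List (Finset (Fin n))} {i : ℕ} {x : Fin n} :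
    x ∈ prefixUnion n L i ↔ ∃ s, ∃ hs : s < L.length, s ≤ i ∧ x ∈ L[s] := by
  rw [prefixUnion, List.mem_foldr_union]
  constructor
  · rintro ⟨A, hA, hx⟩
    obtain ⟨s, hs, rfl⟩ := List.mem_iff_getElem.1 hA
    rw [List.length_take] at hs
    exact ⟨s, by omega, by omega, by simpa using hx⟩
  · rintro ⟨s, hs, hsi, hx⟩
    exact ⟨L[s], List.mem_iff_getElem.2 ⟨s, by simp; omega, by simp⟩, hx⟩

theorem oddMinima_iff {L : List (Finset (Fin n))} (hd : L.Pairwise Disjoint) :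
    OddMinima n L ↔ EvenRecordBlocks L := by
  constructor
  · intro h t ht x hx hrec
    have hxU : x ∈ prefixUnion n L t := mem_prefixUnion.2 ⟨t, ht, le_rfl, hx⟩
    set m := (prefixUnion n L t).min' ⟨x, hxU⟩
    obtain ⟨s, hs, hst, hms⟩ := mem_prefixUnion.1 (Finset.min'_mem _ ⟨x, hxU⟩)
    obtain ⟨j, hj, hev, hmj⟩ :=
      h t ht m ⟨Finset.min'_mem _ _, fun y hy => Finset.min'_le _ y hy⟩
    have hts : t = s :=
      le_antisymm (not_lt.1 fun hlt => (hrec s hlt m hms).not_ge (Finset.min'_le _ x hxU)) hst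
    subst hts
    rwa [hd.eq_of_mem_getElem hj ht (by simpa using hmj) hms] at hev
  · intro h i hi m ⟨hm, hmin⟩
    obtain ⟨s, hs, hsi, hms⟩ := mem_prefixUnion.1 hm
    refine ⟨s, hs, h s hs m hms fun s' hs' y hy => ?_, by simpa using hms⟩
    refine lt_of_le_of_ne (hmin y (mem_prefixUnion.2 ⟨s', _, by omega, hy⟩)) fun hmy => ?_
    exact hs'.ne (hd.eq_of_mem_getElem _ hs (hmy ▸ hy) hms)

theorem posRecords_opToSigned_iff {L : List (Finset (Fin n))} :
    PosRecords (opToSigned n L) ↔ EvenRecordBlocks L := by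
  constructor
  · intro h t ht x hx hrec
    obtain ⟨bs, cs, hbc⟩ := List.append_of_mem (Finset.mem_sortDesc.2 hx)
    have ht' : t < (signedBlocks L).length := by simpa using ht
    have hl := List.flatten_eq_of_getElem_eq_append_cons ht'
      (by rw [getElem_signedBlocks, hbc, List.map_append, List.map_cons])
    rw [← opToSigned_eq_flatten] at hl
    suffices (t % 2 == 0) = true by simpa [Nat.even_iff] using this
    refine h _ _ _ hl fun b hb => ?_
    rcases List.mem_append.1 hb with hb | hb
    · obtain ⟨B, hB, hbB⟩ := List.mem_flatten.1 hb
      obtain ⟨s, hs, rfl⟩ := List.mem_iff_getElem.1 hB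
      rw [List.getElem_take, mem_getElem_signedBlocks] at hbB
      exact hrec s (by simp at hs; omega) _ hbB.1
    · obtain ⟨v, hv, rfl⟩ := List.mem_map.1 hb
      have hsorted := L[t].pairwise_gt_sortDesc
      rw [hbc, List.pairwise_append] at hsorted
      exact hsorted.2.2 v hv x List.mem_cons_self
  · intro h p a q hl hrec
    obtain ⟨t, ht, ha, hbefore⟩ :=
      List.exists_mem_getElem_of_flatten_eq_append_cons ((opToSigned_eq_flatten L).symm.trans hl)
    rw [mem_getElem_signedBlocks] at ha
    have hev := h t (by simpa using ht) a.1 ha.1 fun s hs y hy =>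
      hrec _ (hbefore s hs (y, s % 2 == 0) ((mem_getElem_signedBlocks _).2 ⟨hy, rfl⟩))
    simpa [ha.2, Nat.even_iff] using hev

theorem minPosL_iff_posRecords {l : List (Fin n × Bool)} (hl : (l.map Prod.fst).Nodup) :
    MinPosL n l ↔ PosRecords l := by
  constructor
  · rintro h p a q rfl hrec
    have htake : (p ++ a :: q).take (p.length + 1) = p ++ [a] := by simp [List.take_append]
    have hmem : (a.1, true) ∈ p ++ a :: q := by
      refine h p.length (by simp) a.1 ⟨by simp [htake], fun y hy => ?_⟩
      rw [htake, List.map_append, List.mem_append] at hy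
      rcases hy with hy | hy
      · obtain ⟨b, hb, rfl⟩ := List.mem_map.1 hy
        exact (hrec b hb).le
      · simp_all
    exact congrArg Prod.snd
      (List.inj_on_of_nodup_map hl (List.mem_append_right _ List.mem_cons_self) hmem rfl)
  · intro h i hi m ⟨hm, hmin⟩
    obtain ⟨a, ha, rfl⟩ := List.mem_map.1 hm
    obtain ⟨p, r, hpr⟩ := List.append_of_mem ha
    have hl' : l = p ++ a :: (r ++ l.drop (i + 1)) :=
      calc l = l.take (i + 1) ++ l.drop (i + 1) := (List.take_append_drop _ _).symm
        _ = _ := by rw [hpr, List.append_assoc, List.cons_append]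
    have hnodup := hl
    rw [hl', List.map_append] at hnodup
    have hdisj := (List.nodup_append.1 hnodup).2.2
    have hsign := h p a _ hl' fun b hb => lt_of_le_of_ne
      (hmin b.1 (List.mem_map_of_mem (by rw [hpr]; exact List.mem_append_left _ hb)))
      (hdisj b.1 (List.mem_map_of_mem hb) a.1 (by simp)).symm
    rw [← hsign]
    exact List.mem_of_mem_take ha

theorem PosRecords.head? {l : List (Fin n × Bool)} (h : PosRecords l) :
    ∀ a ∈ l.head?, a.2 = true := by
  intro a ha
  obtain ⟨q, rfl⟩ := List.head?_eq_some_iff.1 ha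
  exact h [] a q rfl (by simp)

theorem minPosL_opToSigned_iff {L : List (Finset (Fin n))} (hL : IsOP n L) :
    MinPosL n (opToSigned n L) ↔ OddMinima n L := by
  rw [minPosL_iff_posRecords (isOP_iff.1 hL).2.2, posRecords_opToSigned_iff, oddMinima_iff hL.2.1]

theorem opToSigned_spec {L : List (Finset (Fin n))} (hL : IsOP n L) (hodd : OddMinima n L) :
    IsSP n (opToSigned n L) ∧ DecBlocks n (opToSigned n L) ∧ MinPosL n (opToSigned n L) :=
  ⟨(isOP_iff.1 hL).2, decBlocks_opToSigned hL.1, (minPosL_opToSigned_iff hL).2 hodd⟩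

theorem signedToOp_spec {l : List (Fin n × Bool)} (hsp : IsSP n l) (hdec : DecBlocks n l)
    (hmin : MinPosL n l) :
    (IsOP n (signedToOp l) ∧ OddMinima n (signedToOp l)) ∧ opToSigned n (signedToOp l) = l := by
  have hinv := opToSigned_signedToOp hdec ((minPosL_iff_posRecords hsp.2).1 hmin).head?
  have hop : IsOP n (signedToOp l) :=
    isOP_iff.2 ⟨fun _ => nonempty_of_mem_signedToOp, by rwa [hinv]⟩
  exact ⟨⟨hop, (minPosL_opToSigned_iff hop).1 (by rwa [hinv])⟩, hinv⟩

end

/-- The ordered partitions of `[n]` all of whose left-to-right minima occur at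
odd locations are in bijection with the signed permutations of `[n]` with
decreasing blocks all of whose left-to-right minima have positive signs, via
the explicit map `opToSigned`. -/
theorem op_equiv_signedPerm (n : ℕ) :
    ∃ e : {L : List (Finset (Fin n)) // IsOP n L ∧ OddMinima n L} ≃
        {l : List (Fin n × Bool) // IsSP n l ∧ DecBlocks n l ∧ MinPosL n l},
      ∀ L, (e L).val = opToSigned n L.val :=
  ⟨{ toFun := fun L => ⟨opToSigned n L.1, opToSigned_spec L.2.1 L.2.2⟩
     invFun := fun l => ⟨signedToOp l.1, (signedToOp_spec l.2.1 l.2.2.1 l.2.2.2).1⟩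
     left_inv := fun L => Subtype.ext (signedToOp_opToSigned L.2.1.1)
     right_inv := fun l => Subtype.ext (signedToOp_spec l.2.1 l.2.2.1 l.2.2.2).2 },
    fun _ => rfl⟩
end

section
/- The number of ordered partitions of [n] of a fixed type {A_1,...,A_k} (a set partition of [n] into k blocks) all of whose left-to-right minima occur at odd locations equals p_k, the number of permutations of [k] all of whose left-to-right minima occur at odd positions. In particular this number depends only on k, not on the blocks themselves. -/
/-- `π` is a set partition of `[n]`. -/
def IsSetPartition (n : ℕ) (π : Finset (Finset (Fin n))) : Prop :=
  (∀ A ∈ π, A.Nonempty) ∧ (∀ A ∈ π, ∀ B ∈ π, A ≠ B → Disjoint A B) ∧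
    π.sup id = Finset.univ

/-!
List the blocks of `π` by increasing minimum as `B 0, …, B (k - 1)`. The ordered partitions of
type `π` are exactly the lists `(B (a 0), …, B (a (k - 1)))` for permutations `a` of `Fin k`.
Since the blocks are disjoint and `B` is increasing in the minimum, the minimum of
`A₀ ∪ ⋯ ∪ Aᵢ` lies in the block `Aⱼ` with `a j = min (a 0, …, a i)`. So the left-to-right
minima of the ordered partition occur at exactly the positions of the left-to-right minima of `a`.
-/

open Finset Function

section Enumeration

variable {β : Type*}

theorem Finset.exists_strictMono_comp_of_injOn {γ : Type*} [LinearOrder γ] (s : Finset β)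
    (f : β → γ) (hf : Set.InjOn f s) :
    ∃ e : Fin s.card → β, StrictMono (f ∘ e) ∧ Set.range e = s := by
  classical
  have hcard : (s.image f).card = s.card := card_image_of_injOn hf
  set g := (s.image f).orderEmbOfFin hcard
  have hg_mem (i : Fin s.card) : ∃ b ∈ s, f b = g i := mem_image.mp (orderEmbOfFin_mem _ _ i)
  choose e he_mem he_eq using hg_mem
  refine ⟨e, fun i j hij => by simpa [he_eq] using g.strictMono hij, ?_⟩
  refine Set.Subset.antisymm (Set.range_subset_iff.mpr he_mem) fun b hb => ?_
  obtain ⟨i, hi⟩ : f b ∈ Set.range g := by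
    rw [range_orderEmbOfFin]; exact mem_image_of_mem f hb
  exact ⟨i, hf (he_mem i) hb (by rw [he_eq, hi])⟩

variable [DecidableEq β]

noncomputable def permEquivNodupList {k : ℕ} {s : Finset β} (e : Fin k → β)
    (he : Injective e) (hs : Set.range e = s) :
    Equiv.Perm (Fin k) ≃ {L : List β // L.Nodup ∧ L.toFinset = s} := by
  refine Equiv.ofBijective (fun a => ⟨List.ofFn (e ∘ a),
    List.nodup_ofFn.mpr (he.comp a.injective), ?_⟩) ⟨fun a b hab => ?_, ?_⟩
  · ext x
    rw [List.mem_toFinset, List.mem_ofFn, ← mem_coe, ← hs]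
    exact (a.surjective.exists (p := fun i => e i = x)).symm
  · exact Equiv.ext (congrFun (he.comp_left (List.ofFn_injective (congrArg Subtype.val hab))))
  · rintro ⟨L, hL_nodup, hL_s⟩
    have hs_image : s = univ.image e := coe_injective (by rw [← hs]; simp)
    have hlen : L.length = k := by
      rw [← List.toFinset_card_of_nodup hL_nodup, hL_s, hs_image, card_image_of_injective _ he,
        card_univ, Fintype.card_fin]
    have h_range (i : Fin k) : ∃ j, e j = L[i] := by
      rw [← Set.mem_range, hs, mem_coe, ← hL_s, List.mem_toFinset]
      exact List.getElem_mem _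
    choose σ hσ using h_range
    have hσ_inj : Injective σ := fun i j hij => Fin.ext <| by
      simpa using Fin.val_eq_of_eq <| hL_nodup.injective_get (a₁ := ⟨i, by omega⟩)
        (a₂ := ⟨j, by omega⟩) (by simpa [hσ] using congrArg e hij)
    refine ⟨Equiv.ofBijective σ hσ_inj.bijective_of_finite, Subtype.ext ?_⟩
    exact List.ext_getElem (by simp [hlen]) fun i _ _ => by simp [hσ]

end Enumeration

theorem List.mem_foldr_union_s9 {α : Type*} [DecidableEq α] {L : List (Finset α)} {a : α} :
    a ∈ L.foldr (· ∪ ·) ∅ ↔ ∃ A ∈ L, a ∈ A := by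
  induction L with
  | nil => simp
  | cons A L ih => simp [ih]

variable {n : ℕ}

theorem mem_prefixUnion_ofFn {k : ℕ} {g : Fin k → Finset (Fin n)} {i : ℕ} {m : Fin n} :
    m ∈ prefixUnion n (List.ofFn g) i ↔ ∃ j : Fin k, (j : ℕ) ≤ i ∧ m ∈ g j := by
  simp only [prefixUnion, List.mem_foldr_union_s9, List.mem_take_iff_getElem, List.length_ofFn,
    List.getElem_ofFn]
  constructor
  · rintro ⟨_, ⟨j, hj, rfl⟩, hm⟩
    exact ⟨⟨j, by omega⟩, by simp; omega, hm⟩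
  · rintro ⟨j, hj, hm⟩
    exact ⟨_, ⟨j, by omega, rfl⟩, hm⟩

namespace IsSetPartition

variable {π : Finset (Finset (Fin n))}

theorem injOn_min (hπ : IsSetPartition n π) :
    Set.InjOn Finset.min (π : Set (Finset (Fin n))) := by
  intro A hA B hB hAB
  by_contra hne
  have hA_ne := hπ.1 A hA
  exact disjoint_left.mp (hπ.2.1 A hA B hB hne) (min'_mem A hA_ne)
    (mem_of_min (by rw [← hAB, coe_min']))

theorem isOP_and_toFinset_eq_iff (hπ : IsSetPartition n π) {L : List (Finset (Fin n))} :
    IsOP n L ∧ L.toFinset = π ↔ L.Nodup ∧ L.toFinset = π := by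
  have mem_π {A} (hA : A ∈ L) (hL : L.toFinset = π) : A ∈ π := hL ▸ List.mem_toFinset.mpr hA
  refine ⟨fun ⟨⟨hne, hdisj, _⟩, hL⟩ => ⟨hdisj.imp_of_mem fun hA _ hd hAB => ?_, hL⟩,
    fun ⟨hnodup, hL⟩ => ⟨⟨fun A hA => hπ.1 A (mem_π hA hL), ?_, ?_⟩, hL⟩⟩
  · exact (hne _ hA).ne_empty ((disjoint_self_iff_empty _).mp (hAB ▸ hd))
  · exact hnodup.imp_of_mem fun hA hB => hπ.2.1 _ (mem_π hA hL) _ (mem_π hB hL)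
  · refine eq_univ_of_forall fun x => List.mem_foldr_union_s9.mpr ?_
    obtain ⟨A, hA, hx⟩ := mem_sup.mp (hπ.2.2 ▸ mem_univ x)
    exact ⟨A, List.mem_toFinset.mp (hL ▸ hA), hx⟩

end IsSetPartition

theorem oddMinima_ofFn_iff {k : ℕ} {g : Fin k → Finset (Fin n)} (hne : ∀ i, (g i).Nonempty)
    (hdisj : Pairwise (Disjoint on g)) :
    OddMinima n (List.ofFn g) ↔ ∀ i, (∀ j ≤ i, (g i).min ≤ (g j).min) → Even (i : ℕ) := by
  simp only [OddMinima, List.length_ofFn, List.get_ofFn, mem_prefixUnion_ofFn]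
  constructor
  · intro h i hi
    obtain ⟨j, hj, hj_even, hm⟩ := h i i.2 ((g i).min' (hne i))
      ⟨⟨i, le_rfl, min'_mem _ _⟩, fun x ⟨j, hji, hx⟩ => WithTop.coe_le_coe.mp <|
        (coe_min' (hne i)).trans_le ((hi j hji).trans (min_le hx))⟩
    obtain rfl : (⟨j, hj⟩ : Fin k) = i := by_contra fun hji =>
      disjoint_left.mp (hdisj hji) hm (min'_mem _ _)
    exact hj_even
  · rintro h i - m ⟨⟨j, hji, hm⟩, hm_min⟩
    refine ⟨j, j.2, h j fun j' hj' => ?_, hm⟩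
    rw [← coe_min' (hne j')]
    exact (min_le hm).trans <| WithTop.coe_le_coe.mpr <|
      hm_min _ ⟨j', (Fin.le_def.mp hj').trans hji, min'_mem _ _⟩

/-- The number of ordered partitions of fixed type `π` (with `k = π.card`
blocks) all of whose left-to-right minima occur at odd locations equals
`permCount k`; in particular it depends only on `k`. -/
theorem card_op_fixed_type (n : ℕ) (π : Finset (Finset (Fin n)))
    (hπ : IsSetPartition n π) :
    Nat.card {L : List (Finset (Fin n)) //
        IsOP n L ∧ OddMinima n L ∧ L.toFinset = π} = permCount π.card := by
  obtain ⟨B, hB_mono, hB_range⟩ := π.exists_strictMono_comp_of_injOn Finset.min hπ.injOn_min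
  have hB_mem (i) : B i ∈ π := mem_coe.mp (hB_range ▸ Set.mem_range_self i)
  have hB_inj : Injective B := hB_mono.injective.of_comp
  have h_lrm (a : Equiv.Perm (Fin π.card)) :
      lrmOddPerm π.card a ↔ OddMinima n (List.ofFn (B ∘ a)) := by
    rw [oddMinima_ofFn_iff (g := B ∘ a) (fun _ => hπ.1 _ (hB_mem _))
      fun _ _ hij => hπ.2.1 _ (hB_mem _) _ (hB_mem _) ((hB_inj.comp a.injective).ne hij)]
    refine forall_congr' fun i => imp_congr (forall₂_congr fun j _ => hB_mono.le_iff_le.symm) ?_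
    exact Nat.odd_add_one.trans Nat.not_odd_iff_even
  calc Nat.card {L : List (Finset (Fin n)) // IsOP n L ∧ OddMinima n L ∧ L.toFinset = π}
      = Nat.card {L : {L : List (Finset (Fin n)) // L.Nodup ∧ L.toFinset = π} // OddMinima n L} :=
        Nat.card_congr <| (Equiv.subtypeEquivRight fun L => by
          rw [← hπ.isOP_and_toFinset_eq_iff]; tauto).trans
          (Equiv.subtypeSubtypeEquivSubtypeInter _ _).symm
    _ = permCount π.card :=
        Nat.card_congr ((permEquivNodupList B hB_inj hB_range).subtypeEquiv h_lrm).symm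
end

section
/- b_n = ∑ over set partitions π of [n] of p_{|π|}, where |π| is the number of blocks of π; equivalently b_n = ∑_{k=1}^n S(n,k)·p_k for n ≥ 1, where S(n,k) is the Stirling number of the second kind. -/
/-- The number of ordered partitions of `[n]` with all left-to-right minima
at odd locations. -/
noncomputable def bseq (n : ℕ) : ℕ :=
  Nat.card {L : List (Finset (Fin n)) // IsOP n L ∧ OddMinima n L}

/-- The Stirling number of the second kind: the number of set partitions of
`[n]` into `k` blocks. -/
noncomputable def stirling2 (n k : ℕ) : ℕ :=
  Nat.card {π : Finset (Finset (Fin n)) // IsSetPartition n π ∧ π.card = k}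

/-!
An ordered partition of `[n]` is the same as a set partition `π` together with a permutation `σ`
of its blocks: list the blocks of `π` by increasing minimum and let the `i`-th block of the
ordered partition be the `σ i`-th of them. The minimum of the union of the first `i + 1` blocks
is the minimum of the block whose own minimum is smallest among them, that is, the block at the
position where `σ 0, …, σ i` is smallest. So the left-to-right minima of the ordered partition sit
at the left-to-right minima of `σ`, and over a fixed `π` the ordered partitions with odd minima
are counted by `p_{|π|}`. Grouping set partitions by their number of blocks gives the Stirling
form.
-/

open Finset Function

namespace OrderedPartition

variable {n : ℕ}

theorem mem_foldr_union {α : Type*} [DecidableEq α] {x : α} {l : List (Finset α)} :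
    x ∈ l.foldr (· ∪ ·) ∅ ↔ ∃ A ∈ l, x ∈ A := by
  induction l with
  | nil => simp
  | cons A l ih => simp [ih]

theorem mem_prefixUnion_ofFn {k : ℕ} {B : Fin k → Finset (Fin n)} {x : Fin n} (i : Fin k) :
    x ∈ prefixUnion n (List.ofFn B) i ↔ ∃ j ≤ i, x ∈ B j := by
  rw [prefixUnion, mem_foldr_union, ← Fin.ofFn_take_eq_take_ofFn i.isLt]
  simp only [List.mem_ofFn', Set.exists_range_iff, Fin.take]
  constructor
  · rintro ⟨j, hj⟩
    exact ⟨_, Fin.mk_le_mk.mpr (Nat.lt_succ_iff.mp j.isLt), hj⟩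
  · rintro ⟨j, hji, hj⟩
    exact ⟨⟨j, Nat.lt_succ_of_le hji⟩, hj⟩

/-- Positions are counted from `0`, so `Even` here means the paper's odd locations. -/
def PrefixMinimaEven {k : ℕ} {β : Type*} [LE β] (f : Fin k → β) : Prop :=
  ∀ i j : Fin k, j ≤ i → (∀ j' ≤ i, f j ≤ f j') → Even (j : ℕ)

theorem lrmOddPerm_iff {k : ℕ} (a : Equiv.Perm (Fin k)) :
    lrmOddPerm k a ↔ PrefixMinimaEven a := by
  refine ⟨fun h i j hji hmin => ?_, fun h i hi => ?_⟩
  · exact Nat.not_odd_iff_even.mp (Nat.odd_add_one.mp (h j fun j' hj' => hmin j' (hj'.trans hji)))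
  · exact Nat.odd_add_one.mpr (Nat.not_odd_iff_even.mpr (h i i le_rfl hi))

theorem oddMinima_ofFn_iff {k : ℕ} {B : Fin k → Finset (Fin n)} (hne : ∀ i, (B i).Nonempty)
    (hdisj : Pairwise (Disjoint on B)) :
    OddMinima n (List.ofFn B) ↔ PrefixMinimaEven fun i => (B i).min := by
  have hOddMinima : OddMinima n (List.ofFn B) ↔ ∀ i : Fin k, ∀ m,
      (m ∈ prefixUnion n (List.ofFn B) i ∧ ∀ x ∈ prefixUnion n (List.ofFn B) i, m ≤ x) →
        ∃ j : Fin k, Even (j : ℕ) ∧ m ∈ B j := by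
    simp [OddMinima, Fin.forall_iff, Fin.exists_iff]
  simp only [hOddMinima, mem_prefixUnion_ofFn]
  constructor
  · intro h i j hji hmin
    obtain ⟨m, hm⟩ : ∃ m : Fin n, (B j).min = m := ⟨_, (coe_min' (hne j)).symm⟩
    have hleast : ∀ x, (∃ j' ≤ i, x ∈ B j') → m ≤ x := by
      rintro x ⟨j', hj'i, hx⟩
      have : (B j).min ≤ (B j').min := hmin j' hj'i
      exact WithTop.coe_le_coe.mp (hm ▸ this.trans (min_le hx))
    obtain ⟨j'', heven, hmj''⟩ := h i m ⟨⟨j, hji, mem_of_min hm⟩, hleast⟩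
    obtain rfl : j'' = j := by
      by_contra hne
      exact disjoint_left.mp (hdisj hne) hmj'' (mem_of_min hm)
    exact heven
  · rintro h i m ⟨⟨j, hji, hmj⟩, hleast⟩
    refine ⟨j, h i j hji fun j' hj'i => ?_, hmj⟩
    obtain ⟨y, hy⟩ : ∃ y : Fin n, (B j').min = y := ⟨_, (coe_min' (hne j')).symm⟩
    change (B j).min ≤ (B j').min
    rw [hy]
    exact (min_le hmj).trans (WithTop.coe_le_coe.mpr (hleast y ⟨j', hj'i, mem_of_min hy⟩))

section SetPartition

variable {π : Finset (Finset (Fin n))} (hπ : IsSetPartition n π)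
include hπ

theorem _root_.IsSetPartition.injOn_min_s11 : Set.InjOn Finset.min (π : Set (Finset (Fin n))) := by
  intro B hB C hC h
  obtain ⟨m, hm⟩ : ∃ m : Fin n, B.min = m := ⟨_, (coe_min' (hπ.1 B hB)).symm⟩
  by_contra hBC
  exact disjoint_left.mp (hπ.2.1 B hB C hC hBC) (mem_of_min hm) (mem_of_min (h ▸ hm))

noncomputable def minEquiv : π ≃ π.image Finset.min :=
  Equiv.ofBijective (fun B => ⟨B.1.min, mem_image_of_mem _ B.2⟩)
    ⟨fun B C h => Subtype.ext (hπ.injOn_min_s11 B.2 C.2 (congrArg Subtype.val h)), fun ⟨_, hm⟩ => by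
      obtain ⟨B, hB, rfl⟩ := mem_image.mp hm
      exact ⟨⟨B, hB⟩, rfl⟩⟩

/-- The blocks of a set partition, listed by increasing minimum. -/
noncomputable def blockEquiv : Fin π.card ≃ π :=
  ((π.image Finset.min).orderIsoOfFin (card_image_of_injOn hπ.injOn_min_s11)).toEquiv.trans
    (minEquiv hπ).symm

theorem min_blockEquiv_le_iff {i j : Fin π.card} :
    (blockEquiv hπ i : Finset (Fin n)).min ≤ (blockEquiv hπ j : Finset (Fin n)).min ↔ i ≤ j := by
  have hmin : ∀ i, (blockEquiv hπ i : Finset (Fin n)).min =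
      (π.image Finset.min).orderIsoOfFin (card_image_of_injOn hπ.injOn_min_s11) i := fun i =>
    congrArg Subtype.val ((minEquiv hπ).apply_symm_apply _)
  rw [hmin, hmin, Subtype.coe_le_coe, OrderIso.le_iff_le]

noncomputable def arrange (σ : Equiv.Perm (Fin π.card)) : List (Finset (Fin n)) :=
  List.ofFn fun i => (blockEquiv hπ (σ i) : Finset (Fin n))

theorem pairwise_disjoint_blockEquiv (σ : Equiv.Perm (Fin π.card)) :
    Pairwise (Disjoint on fun i => (blockEquiv hπ (σ i) : Finset (Fin n))) := fun i j hij =>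
  hπ.2.1 _ (blockEquiv hπ (σ i)).2 _ (blockEquiv hπ (σ j)).2 fun h =>
    hij (σ.injective ((blockEquiv hπ).injective (Subtype.ext h)))

theorem isOP_arrange (σ : Equiv.Perm (Fin π.card)) : IsOP n (arrange hπ σ) := by
  refine ⟨fun A hA => ?_, List.pairwise_ofFn.mpr fun i j hij =>
    pairwise_disjoint_blockEquiv hπ σ hij.ne, ?_⟩
  · obtain ⟨i, rfl⟩ := List.mem_ofFn.mp hA
    exact hπ.1 _ (blockEquiv hπ (σ i)).2
  · ext x
    obtain ⟨B, hB, hxB⟩ := mem_sup.mp (hπ.2.2 ▸ mem_univ x)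
    simp only [mem_foldr_union, mem_univ, iff_true]
    refine ⟨B, List.mem_ofFn.mpr ⟨σ.symm ((blockEquiv hπ).symm ⟨B, hB⟩), ?_⟩, hxB⟩
    simp

theorem toFinset_arrange (σ : Equiv.Perm (Fin π.card)) : (arrange hπ σ).toFinset = π := by
  ext B
  simp only [arrange, List.mem_toFinset, List.mem_ofFn]
  refine ⟨fun ⟨i, hi⟩ => hi ▸ (blockEquiv hπ (σ i)).2, fun hB => ?_⟩
  exact ⟨σ.symm ((blockEquiv hπ).symm ⟨B, hB⟩), by simp⟩

theorem oddMinima_arrange_iff (σ : Equiv.Perm (Fin π.card)) :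
    OddMinima n (arrange hπ σ) ↔ lrmOddPerm π.card σ := by
  rw [arrange, oddMinima_ofFn_iff (fun i => hπ.1 _ (blockEquiv hπ (σ i)).2)
    (pairwise_disjoint_blockEquiv hπ σ), lrmOddPerm_iff]
  simp only [PrefixMinimaEven, min_blockEquiv_le_iff]

end SetPartition

theorem _root_.IsOP.nodup {L : List (Finset (Fin n))} (hL : IsOP n L) : L.Nodup :=
  hL.2.1.imp_of_mem fun hA _ hd hAB => by
    obtain ⟨x, hx⟩ := hL.1 _ hA
    exact disjoint_left.mp hd hx (hAB ▸ hx)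

theorem _root_.IsOP.isSetPartition_toFinset {L : List (Finset (Fin n))} (hL : IsOP n L) :
    IsSetPartition n L.toFinset := by
  refine ⟨fun A hA => hL.1 A (List.mem_toFinset.mp hA), fun A hA B hB hAB => ?_, ?_⟩
  · exact hL.2.1.forall (List.mem_toFinset.mp hA) (List.mem_toFinset.mp hB) hAB
  · ext x
    have hx : x ∈ L.foldr (· ∪ ·) ∅ := hL.2.2 ▸ mem_univ x
    simpa [mem_sup, mem_foldr_union] using hx

theorem _root_.IsOP.exists_arrange_eq {L : List (Finset (Fin n))} (hL : IsOP n L) :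
    ∃ σ, arrange hL.isSetPartition_toFinset σ = L := by
  have hcard : L.toFinset.card = L.length := List.toFinset_card_of_nodup hL.nodup
  let f : Fin L.toFinset.card → Fin L.toFinset.card := fun i =>
    (blockEquiv hL.isSetPartition_toFinset).symm
      ⟨L.get (i.cast hcard), List.mem_toFinset.mpr (L.get_mem _)⟩
  have hf : Injective f := fun i j h => by
    have := congrArg Subtype.val ((blockEquiv _).symm.injective h)
    exact Fin.cast_injective _ (List.nodup_iff_injective_get.mp hL.nodup this)
  refine ⟨Equiv.ofBijective f (Finite.injective_iff_bijective.mp hf), ?_⟩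
  apply List.ext_get (by simp [arrange, hcard])
  intro i _ _
  simp [arrange, f]

noncomputable def arrangeOddMinima
    (x : Σ π : {π // IsSetPartition n π}, {σ : Equiv.Perm (Fin π.1.card) // lrmOddPerm _ σ}) :
    {L : List (Finset (Fin n)) // IsOP n L ∧ OddMinima n L} :=
  ⟨arrange x.1.2 x.2.1, isOP_arrange _ _, (oddMinima_arrange_iff _ _).mpr x.2.2⟩

theorem arrangeOddMinima_bijective : Bijective (arrangeOddMinima (n := n)) := by
  refine ⟨?_, ?_⟩
  · rintro ⟨⟨π₁, h₁⟩, σ₁, _⟩ ⟨⟨π₂, h₂⟩, σ₂, _⟩ h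
    have hL : arrange h₁ σ₁ = arrange h₂ σ₂ := congrArg Subtype.val h
    obtain rfl : π₁ = π₂ := by rw [← toFinset_arrange h₁ σ₁, hL, toFinset_arrange]
    obtain rfl : σ₁ = σ₂ := Equiv.ext fun i =>
      (blockEquiv h₁).injective (Subtype.ext (congrFun (List.ofFn_inj.mp hL) i))
    rfl
  · rintro ⟨L, hOP, hodd⟩
    obtain ⟨σ, hσ⟩ := hOP.exists_arrange_eq
    exact ⟨⟨⟨_, hOP.isSetPartition_toFinset⟩, σ, (oddMinima_arrange_iff _ σ).mp (by rwa [hσ])⟩,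
      Subtype.ext hσ⟩

open scoped Classical in
theorem bseq_eq_sum_permCount (n : ℕ) :
    bseq n = ∑ π ∈ univ.filter (fun π => IsSetPartition n π), permCount π.card := by
  rw [bseq, ← Nat.card_eq_of_bijective _ arrangeOddMinima_bijective, Nat.card_sigma,
    sum_subtype (p := (IsSetPartition n ·)) _ fun π => by simp]
  rfl

theorem _root_.IsSetPartition.card_le {π : Finset (Finset (Fin n))} (hπ : IsSetPartition n π) :
    π.card ≤ n := by
  have := card_le_card_biUnion (s := π) (f := id) (fun A hA B hB => hπ.2.1 A hA B hB) hπ.1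
  rwa [← sup_eq_biUnion, hπ.2.2, card_univ, Fintype.card_fin] at this

theorem _root_.IsSetPartition.card_pos {π : Finset (Finset (Fin n))} (hπ : IsSetPartition n π)
    (hn : 0 < n) : 0 < π.card := by
  rw [Finset.card_pos, nonempty_iff_ne_empty]
  rintro rfl
  simpa [← hπ.2.2] using mem_univ (⟨0, hn⟩ : Fin n)

open scoped Classical in
theorem sum_setPartitions_eq_sum_stirling2 {M : Type*} [AddCommMonoid M] (f : ℕ → M)
    (hn : 0 < n) :
    ∑ π ∈ univ.filter (fun π => IsSetPartition n π), f π.card =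
      ∑ k ∈ Icc 1 n, stirling2 n k • f k := by
  rw [← sum_fiberwise_of_maps_to' (g := card) (t := Icc 1 n) fun π hπ =>
    mem_Icc.mpr ⟨(mem_filter.mp hπ).2.card_pos hn, (mem_filter.mp hπ).2.card_le⟩]
  refine sum_congr rfl fun k _ => ?_
  rw [sum_const, stirling2, Nat.card_eq_fintype_card, Fintype.card_subtype, filter_filter]

end OrderedPartition

open scoped Classical in
/-- `bₙ = ∑_π p_{|π|}` over set partitions `π` of `[n]`; equivalently
`bₙ = ∑_{k=1}^n S(n,k) pₖ` for `n ≥ 1`. -/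
theorem bseq_eq_sum_partitions :
    (∀ n : ℕ, bseq n =
      ∑ π ∈ Finset.univ.filter (fun π => IsSetPartition n π), permCount π.card) ∧
    (∀ n : ℕ, 1 ≤ n →
      bseq n = ∑ k ∈ Finset.Icc 1 n, stirling2 n k * permCount k) := by
  refine ⟨OrderedPartition.bseq_eq_sum_permCount, fun n hn => ?_⟩
  rw [OrderedPartition.bseq_eq_sum_permCount,
    OrderedPartition.sum_setPartitions_eq_sum_stirling2 _ hn]
  simp only [smul_eq_mul]
end

section
/- For n ≥ 1, if (a_1,...,a_n) is a permutation of [n] all of whose left-to-right minima occur at odd positions, then the permutation of [n-1] obtained by deleting a_n and decrementing by 1 every entry greater than a_n also has all of its left-to-right minima at odd positions. Conversely, given a permutation of [n-1] with this property and a value a_n ∈ [n], the extension (inserting a_n at the end after incrementing larger entries) has the property if and only if n is odd, or n is even and a_n > 1. -/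
/-- `l` is a permutation of `[n] = {1, …, n}`, as a list. -/
def IsPermList (n : ℕ) (l : List ℕ) : Prop :=
  l.Perm ((List.range n).map (· + 1))

/-- All left-to-right minima of the list `l` occur at odd (1-indexed)
positions: whenever `l[i] = min(l[0], …, l[i])`, the position `i+1` is odd. -/
def OddMinL (l : List ℕ) : Prop :=
  ∀ i, (h : i < l.length) →
    (∀ j, (hj : j < l.length) → j ≤ i → l[i]'h ≤ l[j]'hj) → Odd (i + 1)

/-!
Whether an entry is a left-to-right minimum depends only on comparisons between entries, so
relabelling the entries by a map that is strictly increasing on them (the standardization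
`shiftDown a` after deleting `a`, or `shiftUp a` before appending it) keeps the positions of the
left-to-right minima. Appending `a` to a list keeps its left-to-right minima and adds position
`length + 1` exactly when `a` is below every entry. For a permutation of `[n-1]` shifted up at `a`,
this happens iff `a = 1` (or `n = 1`), since the entry `1` stays `1` when `a > 1`.
-/

def shiftDown (a x : ℕ) : ℕ := if a < x then x - 1 else x

def shiftUp (a x : ℕ) : ℕ := if a ≤ x then x + 1 else x

theorem shiftDown_strictMonoOn (a : ℕ) : StrictMonoOn (shiftDown a) {x | x ≠ a} := by
  intro x (hx : x ≠ a) y (hy : y ≠ a) hxy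
  unfold shiftDown
  split_ifs <;> omega

theorem shiftUp_strictMono (a : ℕ) : StrictMono (shiftUp a) := by
  intro x y hxy
  unfold shiftUp
  split_ifs <;> omega

theorem shiftDown_shiftUp (a x : ℕ) : shiftDown a (shiftUp a x) = x := by
  unfold shiftDown shiftUp
  split_ifs <;> omega

theorem isPermList_iff {n : ℕ} {l : List ℕ} :
    IsPermList n l ↔ l.Nodup ∧ ∀ x, x ∈ l ↔ 1 ≤ x ∧ x ≤ n := by
  have hmem : ∀ x, x ∈ (List.range n).map (· + 1) ↔ 1 ≤ x ∧ x ≤ n := fun x => by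
    simp only [List.mem_map, List.mem_range]
    exact ⟨by rintro ⟨k, hk, rfl⟩; omega, fun h => ⟨x - 1, by omega, by omega⟩⟩
  have hnodup : ((List.range n).map (· + 1)).Nodup :=
    List.nodup_range.map fun _ _ => Nat.succ.inj
  simp only [IsPermList, ← hmem]
  exact ⟨fun h => ⟨h.nodup_iff.mpr hnodup, fun x => h.mem_iff⟩,
    fun ⟨hl, h⟩ => (List.perm_ext_iff_of_nodup hl hnodup).mpr h⟩

theorem IsPermList.length_eq {n : ℕ} {l : List ℕ} (h : IsPermList n l) : l.length = n := by
  simpa using List.Perm.length_eq h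

theorem oddMinL_map_iff {f : ℕ → ℕ} {l : List ℕ} (hf : StrictMonoOn f {x | x ∈ l}) :
    OddMinL (l.map f) ↔ OddMinL l := by
  have hle : ∀ i j (hi : i < l.length) (hj : j < l.length), f l[i] ≤ f l[j] ↔ l[i] ≤ l[j] :=
    fun i j hi hj => hf.le_iff_le (List.getElem_mem hi) (List.getElem_mem hj)
  simp only [OddMinL, List.length_map, List.getElem_map, hle]

theorem oddMinL_append_singleton_iff {l : List ℕ} {a : ℕ} :
    OddMinL (l ++ [a]) ↔ OddMinL l ∧ ((∀ x ∈ l, a ≤ x) → Odd (l.length + 1)) := by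
  have hget : ∀ i (hi : i < l.length) h, (l ++ [a])[i]'h = l[i] :=
    fun i hi _ => List.getElem_append_left hi
  have hlast : (l ++ [a])[l.length]'(by simp) = a := List.getElem_concat_length rfl _
  constructor
  · intro h
    refine ⟨fun i hi hmin => h i (by simp; omega) fun j hj hji => ?_, fun hle => ?_⟩
    · simpa only [hget i hi, hget j (by omega)] using hmin j (by omega) hji
    · refine h l.length (by simp) fun j hj hjl => ?_
      rw [hlast]
      rcases hjl.lt_or_eq with hjl | rfl
      · simpa only [hget j hjl] using hle _ (List.getElem_mem hjl)
      · rw [hlast]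
  · rintro ⟨hl, hlast_odd⟩ i hi hmin
    rcases (show i ≤ l.length by simp at hi; omega).lt_or_eq with hil | rfl
    · refine hl i hil fun j hj hji => ?_
      have := hmin j (by simp; omega) hji
      rwa [hget i hil, hget j (by omega)] at this
    · refine hlast_odd fun x hx => ?_
      obtain ⟨j, hj, rfl⟩ := List.getElem_of_mem hx
      have := hmin j (by simp; omega) hj.le
      rwa [hget j hj, hlast] at this

theorem IsPermList.notMem_of_append_singleton {n a : ℕ} {l : List ℕ}
    (h : IsPermList n (l ++ [a])) : a ∉ l := by
  have hnd := (isPermList_iff.mp h).1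
  rw [← List.concat_eq_append, List.nodup_concat] at hnd
  exact hnd.1

theorem isPermList_map_shiftDown {n a : ℕ} {l : List ℕ} (h : IsPermList n (l ++ [a])) :
    IsPermList (n - 1) (l.map (shiftDown a)) := by
  obtain ⟨hnd, hmem⟩ := isPermList_iff.mp h
  have hne : ∀ x ∈ l, x ≠ a := fun x hx hxa => h.notMem_of_append_singleton (hxa ▸ hx)
  have ha := (hmem a).mp (by simp)
  refine isPermList_iff.mpr ⟨(List.nodup_append.mp hnd).1.map_on fun x hx y hy =>
    (shiftDown_strictMonoOn a).injOn (hne x hx) (hne y hy), fun y => ⟨?_, fun hy => ?_⟩⟩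
  · intro hy
    obtain ⟨x, hx, rfl⟩ := List.mem_map.mp hy
    have := (hmem x).mp (by simp [hx])
    have := hne x hx
    unfold shiftDown
    split_ifs <;> omega
  · have hup : shiftUp a y ∈ l ++ [a] := (hmem _).mpr (by unfold shiftUp; split_ifs <;> omega)
    have hup_ne : shiftUp a y ≠ a := by unfold shiftUp; split_ifs <;> omega
    have hup_l : shiftUp a y ∈ l := by simpa [hup_ne] using hup
    exact List.mem_map.mpr ⟨_, hup_l, shiftDown_shiftUp a y⟩

theorem forall_le_map_shiftUp_iff {m a : ℕ} {l : List ℕ} (hl : IsPermList m l) (ha : 1 ≤ a) :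
    (∀ x ∈ l.map (shiftUp a), a ≤ x) ↔ a = 1 ∨ m = 0 := by
  have hmem := (isPermList_iff.mp hl).2
  constructor
  · intro h
    by_contra! hne
    have h1 := h (shiftUp a 1) (List.mem_map_of_mem ((hmem 1).mpr (by omega)))
    unfold shiftUp at h1
    split_ifs at h1 <;> omega
  · rintro (rfl | rfl) x hx
    · obtain ⟨y, hy, rfl⟩ := List.mem_map.mp hx
      have := (hmem y).mp hy
      unfold shiftUp
      split_ifs <;> omega
    · obtain rfl : l = [] := List.eq_nil_of_length_eq_zero hl.length_eq
      simp at hx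

theorem delete_last_entry_general (n : ℕ) :
    (∀ (l₀ : List ℕ) (a : ℕ), IsPermList n (l₀ ++ [a]) → OddMinL (l₀ ++ [a]) →
      IsPermList (n - 1) (l₀.map fun x => if a < x then x - 1 else x) ∧
      OddMinL (l₀.map fun x => if a < x then x - 1 else x)) ∧
    (∀ (l₀ : List ℕ) (a : ℕ), IsPermList (n - 1) l₀ → OddMinL l₀ →
      a ∈ Finset.Icc 1 n →
      (OddMinL ((l₀.map fun x => if a ≤ x then x + 1 else x) ++ [a]) ↔
        (Odd n ∨ 1 < a))) := by
  refine ⟨fun l₀ a hperm hodd => ⟨isPermList_map_shiftDown hperm, ?_⟩,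
    fun l₀ a hperm hodd ha => ?_⟩
  · have hmono : StrictMonoOn (shiftDown a) {x | x ∈ l₀} := (shiftDown_strictMonoOn a).mono
      fun x hx hxa => hperm.notMem_of_append_singleton (hxa ▸ hx)
    exact (oddMinL_map_iff hmono).mpr (oddMinL_append_singleton_iff.mp hodd).1
  · obtain ⟨ha1, han⟩ := Finset.mem_Icc.mp ha
    change OddMinL (l₀.map (shiftUp a) ++ [a]) ↔ _
    rw [oddMinL_append_singleton_iff, oddMinL_map_iff ((shiftUp_strictMono a).strictMonoOn _),
      forall_le_map_shiftUp_iff hperm ha1, List.length_map, hperm.length_eq,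
      Nat.sub_add_cancel (by omega)]
    rcases ha1.lt_or_eq with ha_gt | rfl
    · simp only [hodd, ha_gt, true_and, or_true, iff_true]
      rintro (h | h) <;> omega
    · simp [hodd]

/-- Deleting the last entry `a` and decrementing entries greater than `a`
preserves "all left-to-right minima at odd positions", and the extension of a
permutation of `[n-1]` by `a ∈ [n]` (incrementing entries `≥ a`) has the
property iff `n` is odd or `a > 1`. -/
theorem delete_last_entry (n : ℕ) (hn : 1 ≤ n) :
    (∀ (l₀ : List ℕ) (a : ℕ), IsPermList n (l₀ ++ [a]) → OddMinL (l₀ ++ [a]) →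
      IsPermList (n - 1) (l₀.map fun x => if a < x then x - 1 else x) ∧
      OddMinL (l₀.map fun x => if a < x then x - 1 else x)) ∧
    (∀ (l₀ : List ℕ) (a : ℕ), IsPermList (n - 1) l₀ → OddMinL l₀ →
      a ∈ Finset.Icc 1 n →
      (OddMinL ((l₀.map fun x => if a ≤ x then x + 1 else x) ++ [a]) ↔
        (Odd n ∨ 1 < a))) :=
  delete_last_entry_general n
end

section
/- The map that keeps the numerals of a build-tree code and reverses, for each fixed numeral v, the order of the signs appearing over occurrences of v, is an involution on build-tree codes of length n that restricts to a bijection between the set of build-tree codes such that each v^- is preceded by some earlier v^+ and the set of build-tree codes such that each v^- is followed by some later v^+. -/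
/-- The sequence of signs appearing over the occurrences of the numeral `v`
in the code `c`, in left-to-right order. -/
def signsOf (n : ℕ) (c : Fin n → ℕ × Bool) (v : ℕ) : List Bool :=
  ((List.finRange n).filter fun i => (c i).1 = v).map fun i => (c i).2

/-- Each `v⁻` is preceded by some earlier `v⁺`. -/
def EachPreceded (n : ℕ) (c : Fin n → ℕ × Bool) : Prop :=
  ∀ i : Fin n, (c i).2 = false → ∃ j : Fin n, j < i ∧ c j = ((c i).1, true)

/-- Each `v⁻` is followed by some later `v⁺`. -/
def EachFollowed (n : ℕ) (c : Fin n → ℕ × Bool) : Prop :=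
  ∀ i : Fin n, (c i).2 = false → ∃ j : Fin n, i < j ∧ c j = ((c i).1, true)

/-! Inside the occurrences of a numeral `v`, send the `k`-th occurrence from the left to the
`k`-th from the right. This `mirror` is an involution of the positions which preserves numerals
and reverses the order within each numeral class, and the sign-reversal map is `c ↦ c ∘ mirror`.
Hence it is an involution reversing each sign word, and reindexing by an order-reversing
involution turns "each `v⁻` has a later `v⁺`" into "each `v⁻` has an earlier `v⁺`". -/

namespace BuildTreeCode

section Mirror

variable {n : ℕ} {α : Type*} [DecidableEq α]

def occurrences (f : Fin n → α) (a : α) : List (Fin n) :=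
  (List.finRange n).filter fun i => f i = a

lemma mem_occurrences {f : Fin n → α} {a : α} {i : Fin n} :
    i ∈ occurrences f a ↔ f i = a := by
  simp [occurrences]

lemma sortedLT_occurrences (f : Fin n → α) (a : α) : (occurrences f a).SortedLT :=
  List.sortedLT_iff_pairwise.mpr ((List.pairwise_lt_finRange n).filter _)

/-- The `k`-th occurrence of `f i` from the left goes to the `k`-th from the right (the
default `i` of `getD` is never reached). -/
def mirror (f : Fin n → α) (i : Fin n) : Fin n :=
  let l := occurrences f (f i)
  l.getD (l.length - (l.idxOf i + 1)) i

lemma mirror_get {f : Fin n → α} {a : α} (k : Fin (occurrences f a).length) :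
    mirror f ((occurrences f a).get k) = (occurrences f a).get k.rev := by
  have hk : f ((occurrences f a).get k) = a := mem_occurrences.mp (List.get_mem _ _)
  have hidx : (occurrences f a).idxOf ((occurrences f a).get k) = k :=
    (sortedLT_occurrences f a).nodup.idxOf_getElem k k.isLt
  rw [mirror, hk, hidx]
  exact List.getD_eq_get _ _ k.rev

lemma exists_get_occurrences {f : Fin n → α} {a : α} {i : Fin n} (h : f i = a) :
    ∃ k : Fin (occurrences f a).length, (occurrences f a).get k = i :=
  List.mem_iff_get.mp (mem_occurrences.mpr h)

lemma apply_mirror (f : Fin n → α) (i : Fin n) : f (mirror f i) = f i := by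
  generalize ha : f i = a
  obtain ⟨k, rfl⟩ := exists_get_occurrences ha
  rw [mirror_get]
  exact mem_occurrences.mp (List.get_mem _ _)

lemma mirror_involutive (f : Fin n → α) : Function.Involutive (mirror f) := by
  intro i
  obtain ⟨a, ha⟩ : ∃ a, f i = a := ⟨_, rfl⟩
  obtain ⟨k, rfl⟩ := exists_get_occurrences ha
  rw [mirror_get, mirror_get, Fin.rev_rev]

lemma mirror_lt_mirror_iff {f : Fin n → α} {i j : Fin n} (h : f i = f j) :
    mirror f i < mirror f j ↔ j < i := by
  generalize ha : f j = a at h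
  obtain ⟨k, rfl⟩ := exists_get_occurrences h
  obtain ⟨l, rfl⟩ := exists_get_occurrences ha
  have hmono := (sortedLT_occurrences f a).strictMono_get
  rw [mirror_get, mirror_get, hmono.lt_iff_lt, hmono.lt_iff_lt, Fin.rev_lt_rev]

lemma lt_mirror_iff_lt_mirror {f : Fin n → α} {i j : Fin n} (h : f i = f j) :
    i < mirror f j ↔ j < mirror f i := by
  have h' : f (mirror f i) = f j := (apply_mirror f i).trans h
  rw [← mirror_lt_mirror_iff h', mirror_involutive]

lemma map_mirror_occurrences (f : Fin n → α) (a : α) :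
    (occurrences f a).map (mirror f) = (occurrences f a).reverse := by
  refine List.ext_get (by simp) fun k hk hk' => ?_
  simp only [List.get_eq_getElem, List.getElem_map, List.getElem_reverse]
  have := mirror_get (f := f) ⟨k, by simpa using hk⟩
  simp only [List.get_eq_getElem, Fin.val_rev] at this
  rw [this]
  congr 1
  omega

end Mirror

section Codes

variable {n : ℕ} {α β : Type*} [DecidableEq α]

def reverseSigns (c : Fin n → α × β) : Fin n → α × β :=
  c ∘ mirror (Prod.fst ∘ c)

lemma fst_comp_reverseSigns (c : Fin n → α × β) : Prod.fst ∘ reverseSigns c = Prod.fst ∘ c :=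
  funext (apply_mirror (Prod.fst ∘ c))

lemma reverseSigns_involutive : Function.Involutive (reverseSigns (n := n) (α := α) (β := β)) := by
  intro c
  rw [reverseSigns, fst_comp_reverseSigns, reverseSigns, Function.comp_assoc,
    (mirror_involutive _).comp_self, Function.comp_id]

lemma eachPreceded_comp_iff {c : Fin n → ℕ × Bool} {m : Fin n → Fin n}
    (hm : Function.Involutive m) (hfst : ∀ i, (c (m i)).1 = (c i).1)
    (hlt : ∀ {i j}, (c i).1 = (c j).1 → (i < m j ↔ j < m i)) :
    EachPreceded n (c ∘ m) ↔ EachFollowed n c := by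
  constructor
  · intro h i hi
    obtain ⟨j, hj, hcj⟩ := h (m i) (by rwa [Function.comp_apply, hm])
    rw [Function.comp_apply, Function.comp_apply, hm] at hcj
    have hij : (c i).1 = (c j).1 := by rw [← hfst j, hcj]
    exact ⟨m j, (hlt hij).mpr hj, hcj⟩
  · intro h i hi
    obtain ⟨j, hj, hcj⟩ := h (m i) hi
    have hij : (c (m j)).1 = (c (m i)).1 := by rw [hfst, hcj]
    refine ⟨m j, ?_, ?_⟩
    · rw [← hm i]
      exact (hlt hij).mpr (by rwa [hm])
    · rw [Function.comp_apply, Function.comp_apply, hm, hcj]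

lemma isBTC_reverseSigns {c : Fin n → ℕ × Bool} (hc : IsBTC n c) : IsBTC n (reverseSigns c) :=
  fun i => ⟨(apply_mirror (Prod.fst ∘ c) i).trans_le (hc i).1, (hc _).2⟩

lemma signsOf_reverseSigns (c : Fin n → ℕ × Bool) (v : ℕ) :
    signsOf n (reverseSigns c) v = (signsOf n c v).reverse := by
  have signsOf_eq (d : Fin n → ℕ × Bool) :
      signsOf n d v = (occurrences (Prod.fst ∘ d) v).map (Prod.snd ∘ d) := rfl
  rw [signsOf_eq, signsOf_eq, fst_comp_reverseSigns, reverseSigns, ← Function.comp_assoc,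
    ← List.map_map, map_mirror_occurrences, List.map_reverse]

lemma eachPreceded_reverseSigns_iff (c : Fin n → ℕ × Bool) :
    EachPreceded n (reverseSigns c) ↔ EachFollowed n c :=
  eachPreceded_comp_iff (mirror_involutive _) (apply_mirror (Prod.fst ∘ c))
    (lt_mirror_iff_lt_mirror (f := Prod.fst ∘ c))

end Codes
end BuildTreeCode

/-- The map keeping the numerals of a build-tree code and reversing, for each
fixed numeral, the order of the signs over its occurrences, is an involution
on build-tree codes of length `n` carrying the codes in which each `v⁻` is
preceded by some `v⁺` exactly onto the codes in which each `v⁻` is followed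
by some `v⁺`. -/
theorem sign_reversal_involution (n : ℕ) :
    ∃ φ : {c : Fin n → ℕ × Bool // IsBTC n c} → {c : Fin n → ℕ × Bool // IsBTC n c},
      Function.Involutive φ ∧
      (∀ c (i : Fin n), ((φ c).val i).1 = (c.val i).1) ∧
      (∀ c (v : ℕ), signsOf n (φ c).val v = (signsOf n c.val v).reverse) ∧
      (∀ c, EachPreceded n (φ c).val ↔ EachFollowed n c.val) :=
  ⟨fun c => ⟨BuildTreeCode.reverseSigns c.val, BuildTreeCode.isBTC_reverseSigns c.prop⟩,
    fun c => Subtype.ext (BuildTreeCode.reverseSigns_involutive c.val),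
    fun c => congrFun (BuildTreeCode.fst_comp_reverseSigns c.val),
    fun c => BuildTreeCode.signsOf_reverseSigns c.val,
    fun c => BuildTreeCode.eachPreceded_reverseSigns_iff c.val⟩
end

section
/- Under the bijection from build-tree codes of length n to signed permutations of [n] (with all left-to-right minima positive), a build-tree code satisfies 'there is a v^+ after each v^-' if and only if the corresponding signed permutation has decreasing blocks. -/
/-- Insert the element `e s` immediately after the (unique) entry with value
`j`, where `s` is the sign of that entry. -/
def insAfter (l : List (ℕ × Bool)) (j : ℕ) (e : Bool → ℕ × Bool) : List (ℕ × Bool) :=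
  match l with
  | [] => []
  | (a, s) :: t => if a = j then (a, s) :: e s :: t else (a, s) :: insAfter t j e

/-- One step of the incremental construction: given the current signed
permutation `l`, the new element `i` and the code entry `c`:
if `c = 0⁺` insert `i` at the beginning with positive sign; if `c = j⁺`
(`j > 0`) insert `i` after `j` with the sign opposite to that of `j`; if
`c = j⁻` insert `i` after `j` with the same sign as `j`. -/
def step (l : List (ℕ × Bool)) (i : ℕ) (c : ℕ × Bool) : List (ℕ × Bool) :=
  if c.1 = 0 then (i, true) :: l
  else insAfter l c.1 fun s => (i, if c.2 then !s else s)

/-- The signed permutation of `[n]` built from a build-tree code. -/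
def buildSP (n : ℕ) (c : Fin n → ℕ × Bool) : List (ℕ × Bool) :=
  (List.finRange n).foldl (fun l i => step l (i.val + 1) (c i)) []

/-- Decreasing blocks: adjacent entries with the same sign are decreasing. -/
def DecBlocksN (l : List (ℕ × Bool)) : Prop :=
  ∀ i, (h : i + 1 < l.length) →
    (l[i]'(Nat.lt_of_succ_lt h)).2 = (l[i + 1]'h).2 →
    (l[i + 1]'h).1 < (l[i]'(Nat.lt_of_succ_lt h)).1

lemma List.eq_or_mem_getLast?_of_mem_getLast?_cons {α : Type*} {a p : α} {l : List α}
    (h : p ∈ (a :: l).getLast?) : p = a ∨ p ∈ l.getLast? := by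
  rw [List.getLast?_cons] at h
  cases hl : l.getLast? <;> simp_all

lemma insAfter_split (A : List (ℕ × Bool)) (x : ℕ) (s : Bool) (B : List (ℕ × Bool))
    (e : Bool → ℕ × Bool) (hx : x ∉ A.map Prod.fst) :
    insAfter (A ++ (x, s) :: B) x e = A ++ (x, s) :: e s :: B := by
  induction A with
  | nil => simp [insAfter]
  | cons a t ih =>
    obtain ⟨a1, a2⟩ := a
    simp only [List.map_cons, List.mem_cons, not_or] at hx
    simp only [List.cons_append, insAfter, if_neg (Ne.symm hx.1), ih hx.2]

lemma List.IsChain.append_singleton_of_imp {α : Type*} {R S : α → α → Prop} {l : List α} {c : α}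
    (H : ∀ a ∈ l, ∀ b, R a b → S a b) (h : (l ++ [c]).IsChain R) : (l ++ [c]).IsChain S := by
  rw [List.isChain_append] at h ⊢
  obtain ⟨hl, -, hlc⟩ := h
  exact ⟨hl.imp_of_mem_imp fun a b ha _ => H a ha b, .singleton c,
    fun a ha b hb => H a (List.mem_of_getLast? ha) b (hlc a ha b hb)⟩

def build (d : ℕ → ℕ × Bool) : ℕ → List (ℕ × Bool)
  | 0 => []
  | k + 1 => step (build d k) (k + 1) (d k)

def IsLastPointer (d : ℕ → ℕ × Bool) (k x j : ℕ) : Prop :=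
  j < k ∧ (d j).1 = x ∧ ∀ j', j < j' → j' < k → (d j').1 ≠ x

def IsNext (d : ℕ → ℕ × Bool) (k : ℕ) (p q : ℕ × Bool) : Prop :=
  ((∀ j < k, (d j).1 ≠ p.1) ∧ q.1 < p.1) ∨
    ∃ j, IsLastPointer d k p.1 j ∧ q = (j + 1, if (d j).2 then !p.2 else p.2)

structure BuildInv (d : ℕ → ℕ × Bool) (k : ℕ) (L : List (ℕ × Bool)) : Prop where
  perm : (L.map Prod.fst).Perm (List.range' 1 k)
  isChain : L.IsChain (IsNext d k)
  getLast : ∀ p ∈ L.getLast?, ∀ j < k, (d j).1 ≠ p.1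

section
variable {d : ℕ → ℕ × Bool} {k x j : ℕ}

lemma IsLastPointer.unique {j' : ℕ} (h : IsLastPointer d k x j) (h' : IsLastPointer d k x j') :
    j = j' := by
  by_contra hne
  rcases Nat.lt_or_gt_of_ne hne with hlt | hlt
  · exact h.2.2 j' hlt h'.1 h'.2.1
  · exact h'.2.2 j hlt h.1 h.2.1

lemma exists_isLastPointer {i : ℕ} (hi : i < k) : ∃ j, i ≤ j ∧ IsLastPointer d k (d i).1 j := by
  set s := (Finset.Ico i k).filter fun j => (d j).1 = (d i).1
  obtain ⟨j, hjs, hmax⟩ := s.exists_max_image id ⟨i, by simp [s, hi]⟩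
  simp only [s, Finset.mem_filter, Finset.mem_Ico] at hjs hmax
  refine ⟨j, hjs.1.1, hjs.1.2, hjs.2, fun j' hjj' hj'k hj' => ?_⟩
  have := hmax j' ⟨⟨by omega, hj'k⟩, hj'⟩
  simp only [id] at this
  omega

lemma isLastPointer_succ_self : IsLastPointer d (k + 1) (d k).1 k :=
  ⟨k.lt_succ_self, rfl, fun _ h h' => absurd h' (by omega)⟩

lemma isLastPointer_succ_of_ne (hx : x ≠ (d k).1) :
    IsLastPointer d (k + 1) x j ↔ IsLastPointer d k x j := by
  constructor
  · rintro ⟨hj, hjx, hlast⟩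
    have hjk : j ≠ k := by rintro rfl; exact hx hjx.symm
    exact ⟨by omega, hjx, fun j' h h' => hlast j' h (by omega)⟩
  · rintro ⟨hj, hjx, hlast⟩
    refine ⟨by omega, hjx, fun j' h h' => ?_⟩
    rcases Nat.lt_succ_iff_lt_or_eq.1 h' with h' | rfl
    · exact hlast j' h h'
    · exact fun h => hx h.symm

lemma isNext_succ_of_ne {p q : ℕ × Bool} (hp : p.1 ≠ (d k).1) :
    IsNext d (k + 1) p q ↔ IsNext d k p q := by
  simp only [IsNext, isLastPointer_succ_of_ne hp, Nat.forall_lt_succ_right]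
  exact or_congr_left (and_congr_left fun _ => and_iff_left fun h => hp h.symm)

lemma isNext_succ_self {s : Bool} :
    IsNext d (k + 1) ((d k).1, s) (k + 1, if (d k).2 then !s else s) :=
  .inr ⟨k, isLastPointer_succ_self, rfl⟩

lemma forall_lt_fst_ne_self (hd : ∀ j, (d j).1 ≤ j) : ∀ j < k, (d j).1 ≠ k :=
  fun j hj h => by have := hd j; omega

lemma forall_lt_succ_fst_ne (h : ∀ j < k, (d j).1 ≠ x) (hx : x ≠ (d k).1) :
    ∀ j < k + 1, (d j).1 ≠ x :=
  Nat.forall_lt_succ_right.2 ⟨h, fun h => hx h.symm⟩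

lemma isNext_new (hd : ∀ j, (d j).1 ≤ j) {σ : Bool} {q : ℕ × Bool} (hq : q.1 ≤ k) :
    IsNext d (k + 1) (k + 1, σ) q :=
  .inl ⟨forall_lt_fst_ne_self hd, by simp only; omega⟩

end

namespace BuildInv
variable {d : ℕ → ℕ × Bool} {k : ℕ} {L : List (ℕ × Bool)}

lemma mem_fst_iff (hL : BuildInv d k L) {x : ℕ} : x ∈ L.map Prod.fst ↔ 1 ≤ x ∧ x ≤ k := by
  rw [hL.perm.mem_iff, List.mem_range'_1]
  omega

lemma fst_le (hL : BuildInv d k L) {p : ℕ × Bool} (hp : p ∈ L) : p.1 ≤ k :=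
  (hL.mem_fst_iff.1 (List.mem_map_of_mem hp)).2

lemma nodup (hL : BuildInv d k L) : (L.map Prod.fst).Nodup :=
  hL.perm.nodup_iff.2 List.nodup_range'

lemma perm_succ (hL : BuildInv d k L) {A B : List ℕ} (h : L.map Prod.fst = A ++ B) :
    (A ++ (k + 1) :: B).Perm (List.range' 1 (k + 1)) := by
  rw [List.range'_concat, Nat.one_mul, Nat.add_comm 1 k]
  exact List.perm_middle.trans (((h ▸ hL.perm).cons _).trans (List.perm_append_singleton _ _).symm)

lemma cons (hd : ∀ j, (d j).1 ≤ j) (hL : BuildInv d k L) (h0 : (d k).1 = 0) :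
    BuildInv d (k + 1) ((k + 1, true) :: L) where
  perm := hL.perm_succ (A := []) rfl
  isChain := by
    refine List.isChain_cons.2 ⟨fun q hq => isNext_new hd (hL.fst_le (List.mem_of_head? hq)), ?_⟩
    refine hL.isChain.imp_of_mem_imp fun p q hp _ => (isNext_succ_of_ne ?_).2
    have := hL.mem_fst_iff.1 (List.mem_map_of_mem hp)
    omega
  getLast p hp := by
    rcases List.eq_or_mem_getLast?_of_mem_getLast?_cons hp with rfl | hp
    · exact forall_lt_fst_ne_self hd
    · have := hL.mem_fst_iff.1 (List.mem_map_of_mem (List.mem_of_getLast? hp))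
      exact forall_lt_succ_fst_ne (hL.getLast p hp) (by omega)

lemma insert (hd : ∀ j, (d j).1 ≤ j) (hL : BuildInv d k L) (h0 : (d k).1 ≠ 0) :
    BuildInv d (k + 1) (insAfter L (d k).1 fun s => (k + 1, if (d k).2 then !s else s)) := by
  set x := (d k).1
  obtain ⟨⟨_, s⟩, hmem, rfl : _ = x⟩ :=
    List.mem_map.1 (hL.mem_fst_iff.2 ⟨Nat.one_le_iff_ne_zero.2 h0, hd k⟩)
  obtain ⟨A, B, rfl⟩ := List.append_of_mem hmem
  have hx : x ∉ A.map Prod.fst ++ B.map Prod.fst := by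
    have := hL.nodup
    rw [List.map_append, List.map_cons, List.nodup_middle, List.nodup_cons] at this
    exact this.1
  have hA : ∀ a ∈ A, a.1 ≠ x := fun a ha h =>
    hx (List.mem_append_left _ (h ▸ List.mem_map_of_mem ha))
  have hB : ∀ b ∈ B, b.1 ≠ x := fun b hb h =>
    hx (List.mem_append_right _ (h ▸ List.mem_map_of_mem hb))
  rw [insAfter_split A x s B _ fun h => hx (List.mem_append_left _ h)]
  obtain ⟨hchainA, hchainB⟩ := List.isChain_split.1 hL.isChain
  refine ⟨?_, ?_, fun p hp => ?_⟩
  · simpa using hL.perm_succ (A := A.map Prod.fst ++ [x]) (B := B.map Prod.fst) (by simp)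
  · refine List.isChain_append_cons_cons.2 ⟨?_, isNext_succ_self, ?_⟩
    · exact hchainA.append_singleton_of_imp fun a ha b => (isNext_succ_of_ne (hA a ha)).2
    · refine List.isChain_cons.2 ⟨fun q hq => isNext_new hd (hL.fst_le ?_), ?_⟩
      · exact List.mem_append_right _ (List.mem_cons_of_mem _ (List.mem_of_head? hq))
      · exact hchainB.tail.imp_of_mem_imp fun b c hb _ => (isNext_succ_of_ne (hB b hb)).2
  · rw [List.getLast?_append_cons, List.getLast?_cons_cons] at hp
    rcases List.eq_or_mem_getLast?_of_mem_getLast?_cons hp with rfl | hp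
    · exact forall_lt_fst_ne_self hd
    · refine forall_lt_succ_fst_ne (hL.getLast p ?_) (hB p (List.mem_of_getLast? hp))
      rw [List.getLast?_append_cons]
      exact List.mem_getLast?_cons hp

end BuildInv

lemma buildInv_build {d : ℕ → ℕ × Bool} (hd : ∀ j, (d j).1 ≤ j) : ∀ k, BuildInv d k (build d k)
  | 0 => ⟨by simp [build], by simp [build], by simp [build]⟩
  | k + 1 => by
    rw [build, step]
    by_cases h0 : (d k).1 = 0
    · rw [if_pos h0]
      exact (buildInv_build hd k).cons hd h0
    · rw [if_neg h0]
      exact (buildInv_build hd k).insert hd h0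

lemma BuildInv.exists_eq_append_cons_cons {d : ℕ → ℕ × Bool} {k x j : ℕ} {L : List (ℕ × Bool)}
    (hd : ∀ j, (d j).1 ≤ j) (hL : BuildInv d k L) (hx : x ≠ 0) (hj : IsLastPointer d k x j) :
    ∃ A s B, L = A ++ (x, s) :: (j + 1, if (d j).2 then !s else s) :: B := by
  obtain ⟨⟨_, s⟩, hmem, rfl⟩ :=
    List.mem_map.1 (hL.mem_fst_iff.2 ⟨Nat.one_le_iff_ne_zero.2 hx, hj.2.1 ▸ (hd j).trans hj.1.le⟩)
  obtain ⟨A, B, rfl⟩ := List.append_of_mem hmem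
  cases B with
  | nil => exact absurd hj.2.1 (hL.getLast _ (by simp) j hj.1)
  | cons q B =>
    rcases (List.isChain_append_cons_cons.1 hL.isChain).2.1 with ⟨hno, -⟩ | ⟨j', hj', rfl⟩
    · exact absurd hj.2.1 (hno j hj.1)
    · obtain rfl := hj'.unique hj
      exact ⟨A, s, B, rfl⟩

lemma decBlocksN_iff_isChain (l : List (ℕ × Bool)) :
    DecBlocksN l ↔ l.IsChain fun p q => p.2 = q.2 → q.1 < p.1 := by
  rw [List.isChain_iff_getElem]; rfl

def extendCode (n : ℕ) (c : Fin n → ℕ × Bool) (i : ℕ) : ℕ × Bool :=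
  if h : i < n then c ⟨i, h⟩ else (0, true)

section
variable {n : ℕ} {c : Fin n → ℕ × Bool}

@[simp]
lemma extendCode_val (i : Fin n) : extendCode n c i = c i := by
  simp [extendCode]

lemma buildSP_eq_build (n : ℕ) (c : Fin n → ℕ × Bool) : buildSP n c = build (extendCode n c) n := by
  have hrange : ∀ k, (List.range k).foldl (fun l i => step l (i + 1) (extendCode n c i)) [] =
      build (extendCode n c) k := by
    intro k
    induction k with
    | zero => rfl
    | succ k ih => rw [List.range_succ, List.foldl_append, ih]; rfl
  rw [← hrange, ← List.map_coe_finRange_eq_range, List.foldl_map, buildSP]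
  simp

lemma IsBTC.extendCode_fst_le (hc : IsBTC n c) (j : ℕ) : (extendCode n c j).1 ≤ j := by
  unfold extendCode
  split_ifs with h
  exacts [(hc ⟨j, h⟩).1, Nat.zero_le j]

lemma IsBTC.extendCode_ne (hc : IsBTC n c) (j : ℕ) : extendCode n c j ≠ (0, false) := by
  unfold extendCode
  split_ifs with h
  exacts [(hc ⟨j, h⟩).2, by simp]

lemma eachFollowed_iff :
    EachFollowed n c ↔ ∀ x j, IsLastPointer (extendCode n c) n x j → (extendCode n c j).2 := by
  constructor
  · rintro h x j ⟨hj, rfl, hlast⟩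
    by_contra hneg
    obtain ⟨j', hjj', hj'⟩ := h ⟨j, hj⟩ (by simpa [extendCode, hj] using hneg)
    exact hlast j' hjj' j'.isLt (by simp [hj', extendCode, hj])
  · intro h i hi
    obtain ⟨j, hij, hj⟩ := exists_isLastPointer (d := extendCode n c) i.isLt
    have hpos := h _ _ hj
    have hij : i.val < j := lt_of_le_of_ne hij fun e => by simp [← e, hi] at hpos
    refine ⟨⟨j, hj.1⟩, hij, Prod.ext ?_ ?_⟩
    · simpa [extendCode, hj.1] using hj.2.1
    · simpa [extendCode, hj.1] using hpos

end

/-- Under the bijection from build-tree codes to signed permutations, a code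
satisfies "there is a `v⁺` after each `v⁻`" iff the corresponding signed
permutation has decreasing blocks. -/
theorem followed_iff_decreasingBlocks (n : ℕ) (c : Fin n → ℕ × Bool)
    (hc : IsBTC n c) :
    EachFollowed n c ↔ DecBlocksN (buildSP n c) := by
  have hd := hc.extendCode_fst_le
  have hL := buildInv_build hd n
  rw [eachFollowed_iff, buildSP_eq_build, decBlocksN_iff_isChain]
  constructor
  · intro hpos
    refine hL.isChain.imp fun p q hpq hs => ?_
    rcases hpq with ⟨-, hlt⟩ | ⟨j, hj, rfl⟩
    · exact hlt
    · simp [hpos _ _ hj] at hs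
  · intro hdec x j hj
    by_contra hneg
    have hx : x ≠ 0 := by
      rintro rfl
      exact hc.extendCode_ne j (Prod.ext hj.2.1 (by simpa using hneg))
    obtain ⟨A, s, B, hsplit⟩ := hL.exists_eq_append_cons_cons hd hx hj
    have hxj : x ≤ j := hj.2.1 ▸ hd j
    have hjx : j + 1 < x :=
      List.isChain_iff_forall_rel_of_append_cons_cons.1 hdec hsplit (by simp [hneg])
    omega
end

section
/- Let R be the region of the type-B arrangement B_n corresponding to a signed permutation ((a_1,...,a_n), σ), i.e. R = {x ∈ ℝ^n : |x_{a_1}| > ... > |x_{a_n}| > 0, sgn(x_i) = σ(i)}, and let P = {x : l_1 x_1 + ... + l_n x_n = 1} with l_1 ≫ l_2 ≫ ... ≫ l_n > 0. If every left-to-right minimum of (a_1,...,a_n) has positive sign under σ, then R ∩ P is nonempty and bounded (it is an open simplex with vertices v_i/f(v_i), where v_i = σ(a_1)e_{a_1} + ... + σ(a_i)e_{a_i} and f(x) = ∑ l_j x_j). -/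
/-- `min (a 0, …, a i)`, the left-to-right minimum at position `i`. -/
noncomputable def minUpTo (n : ℕ) (a : Equiv.Perm (Fin n)) (i : Fin n) : Fin n :=
  ((Finset.Iic i).image a).min'
    (Finset.Nonempty.image ⟨i, Finset.mem_Iic.mpr le_rfl⟩ a)

/-- The `i`-th partial sum `f(vᵢ) = σ(a₀) l_{a₀} + ⋯ + σ(aᵢ) l_{aᵢ}`. -/
noncomputable def partialSum (n : ℕ) (a : Equiv.Perm (Fin n)) (σ : Fin n → Bool)
    (l : Fin n → ℝ) (i : Fin n) : ℝ :=
  ∑ t ∈ Finset.Iic i, (if σ (a t) then (1 : ℝ) else -1) * l (a t)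

private lemma abel_aux (c y : ℕ → ℝ) (N : ℕ) :
    ∑ t ∈ Finset.range N, c t * y t =
      ∑ s ∈ Finset.range N, (∑ t ∈ Finset.range (s + 1), c t) * (y s - y (s + 1))
        + (∑ t ∈ Finset.range N, c t) * y N := by
  induction N with
  | zero => simp
  | succ N ih =>
    rw [Finset.sum_range_succ, ih, Finset.sum_range_succ
      (f := fun s => (∑ t ∈ Finset.range (s + 1), c t) * (y s - y (s + 1))),
      Finset.sum_range_succ (f := c)]
    ring

private lemma swap_sum (n : ℕ) (F : Fin n → Fin n → ℝ) :
    ∑ t, ∑ s ∈ Finset.Ici t, F t s = ∑ s, ∑ t ∈ Finset.Iic s, F t s := by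
  have h1 : ∀ t : Fin n, Finset.Ici t = Finset.univ.filter (fun s => t ≤ s) := by
    intro t; ext s; simp
  have h2 : ∀ s : Fin n, Finset.Iic s = Finset.univ.filter (fun t => t ≤ s) := by
    intro s; ext t; simp
  simp_rw [h1, h2, Finset.sum_filter]
  exact Finset.sum_comm

private lemma nat_Iic_eq_range (m : ℕ) : Finset.Iic m = Finset.range (m + 1) := by
  ext k; simp [Nat.lt_succ_iff]

private lemma sum_Iic_eq_range (n : ℕ) (g : Fin n → ℝ) (s : Fin n) :
    ∑ t ∈ Finset.Iic s, g t
      = ∑ k ∈ Finset.range (s.val + 1), if h : k < n then g ⟨k, h⟩ else 0 := by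
  rw [← nat_Iic_eq_range, ← Fin.map_valEmbedding_Iic, Finset.sum_map]
  refine Finset.sum_congr rfl fun t _ => ?_
  rw [dif_pos (by exact t.isLt)]
  rfl

/-- If every left-to-right minimum of the signed permutation `(a, σ)` has
positive sign, then the intersection of the corresponding region
`R = {x : |x_{a₁}| > ⋯ > |x_{aₙ}| > 0, sgn(xᵢ) = σ(i)}` of the type-B
arrangement with the generic hyperplane `P = {∑ lⱼ xⱼ = 1}` (genericity:
each partial sum `f(vᵢ)` has the sign of `σ(min(a₁,…,aᵢ))`) is nonempty and
bounded. -/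
theorem region_inter_bounded (n : ℕ) (hn : 0 < n) (a : Equiv.Perm (Fin n))
    (σ : Fin n → Bool) (l : Fin n → ℝ) (hl : ∀ j, 0 < l j)
    (hgen : ∀ i : Fin n, if σ (minUpTo n a i) = true
      then 0 < partialSum n a σ l i else partialSum n a σ l i < 0)
    (hpos : ∀ i : Fin n, σ (minUpTo n a i) = true) :
    ({x : Fin n → ℝ | (∀ i j : Fin n, i < j → |x (a j)| < |x (a i)|) ∧
        (∀ i, x i ≠ 0) ∧ (∀ i, 0 < x i ↔ σ i = true) ∧
        (∑ j, l j * x j) = 1} : Set (Fin n → ℝ)).Nonempty ∧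
    Bornology.IsBounded ({x : Fin n → ℝ |
        (∀ i j : Fin n, i < j → |x (a j)| < |x (a i)|) ∧
        (∀ i, x i ≠ 0) ∧ (∀ i, 0 < x i ↔ σ i = true) ∧
        (∑ j, l j * x j) = 1} : Set (Fin n → ℝ)) := by
  have hne : Nonempty (Fin n) := ⟨⟨0, hn⟩⟩
  set S : Fin n → ℝ := partialSum n a σ l with hSdef
  have hSpos : ∀ i, 0 < S i := by
    intro i
    have h := hgen i
    rw [hpos i] at h
    simpa using h
  set ε : Fin n → ℝ := fun i => if σ i then (1 : ℝ) else -1 with hεdef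
  have hεabs : ∀ i, |ε i| = 1 := by
    intro i; by_cases h : σ i <;> simp [hεdef, h]
  have hnR : (0 : ℝ) < n := by exact_mod_cast hn
  have hSeq : ∀ s : Fin n, S s = ∑ t ∈ Finset.Iic s, ε (a t) * l (a t) := fun s => rfl
  constructor
  · -- Nonemptiness
    set d : Fin n → ℝ := fun s => 1 / (n * S s) with hddef
    have hd : ∀ s, 0 < d s := fun s => div_pos one_pos (mul_pos hnR (hSpos s))
    set y : Fin n → ℝ := fun t => ∑ s ∈ Finset.Ici t, d s with hydef
    have hy : ∀ t, 0 < y t :=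
      fun t => Finset.sum_pos (fun s _ => hd s) ⟨t, Finset.mem_Ici.mpr le_rfl⟩
    have hyanti : ∀ i j : Fin n, i < j → y j < y i := by
      intro i j hij
      refine Finset.sum_lt_sum_of_subset
        (Finset.Ici_subset_Ici.mpr hij.le) (Finset.mem_Ici.mpr le_rfl) ?_ (hd i)
        (fun k _ _ => (hd k).le)
      simp [Finset.mem_Ici, not_le, hij]
    refine ⟨fun j => ε j * y (a.symm j), ?_, ?_, ?_, ?_⟩
    · intro i j hij
      have habs : ∀ t : Fin n, |ε (a t) * y (a.symm (a t))| = y t := by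
        intro t
        rw [Equiv.symm_apply_apply, abs_mul, hεabs, one_mul, abs_of_pos (hy t)]
      simpa only [Set.mem_setOf_eq, habs] using hyanti i j hij
    · intro i
      have := hy (a.symm i)
      have hεne : ε i ≠ 0 := by by_cases h : σ i <;> simp [hεdef, h]
      exact mul_ne_zero hεne (hy (a.symm i)).ne'
    · intro i
      by_cases h : σ i <;> simp [hεdef, h, hy (a.symm i), not_lt.mpr (hy (a.symm i)).le,
        neg_mul, one_mul]
    · have h1 : ∑ j, l j * (ε j * y (a.symm j))
          = ∑ t, l (a t) * (ε (a t) * y (a.symm (a t))) := (Equiv.sum_comp a _).symm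
      show (∑ j, l j * (ε j * y (a.symm j))) = 1
      rw [h1]
      have h2 : ∀ t : Fin n, l (a t) * (ε (a t) * y (a.symm (a t)))
          = ∑ s ∈ Finset.Ici t, (ε (a t) * l (a t)) * d s := by
        intro t
        rw [Equiv.symm_apply_apply, hydef, Finset.mul_sum]
        simp_rw [Finset.mul_sum]
        exact Finset.sum_congr rfl fun s _ => by ring
      simp_rw [h2]
      rw [swap_sum n (fun t s => (ε (a t) * l (a t)) * d s)]
      have h3 : ∀ s : Fin n, ∑ t ∈ Finset.Iic s, (ε (a t) * l (a t)) * d s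
          = (1 : ℝ) / n := by
        intro s
        rw [← Finset.sum_mul, ← hSeq s, hddef]
        have hS0 : S s ≠ 0 := (hSpos s).ne'
        field_simp
      simp_rw [h3]
      rw [Finset.sum_const, Finset.card_univ, Fintype.card_fin, nsmul_eq_mul]
      field_simp
  · -- Boundedness
    set cmin : ℝ := Finset.univ.inf' Finset.univ_nonempty S with hcdef
    have hc : 0 < cmin := by
      rw [hcdef, Finset.lt_inf'_iff]
      exact fun i _ => hSpos i
    have hcle : ∀ i, cmin ≤ S i := fun i => Finset.inf'_le _ (Finset.mem_univ i)
    rw [isBounded_iff_forall_norm_le]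
    refine ⟨1 / cmin, ?_⟩
    rintro x ⟨hord, hxne, hsgn, hsum⟩
    set Y : ℕ → ℝ := fun k => if h : k < n then |x (a ⟨k, h⟩)| else 0 with hYdef
    set C : ℕ → ℝ := fun k => if h : k < n then ε (a ⟨k, h⟩) * l (a ⟨k, h⟩) else 0
      with hCdef
    have hxε : ∀ j, x j = ε j * |x j| := by
      intro j
      by_cases h : σ j
      · rw [abs_of_pos ((hsgn j).mpr h)]; simp [hεdef, h]
      · have hx : x j < 0 := by
          rcases lt_trichotomy (x j) 0 with h' | h' | h'
          · exact h'
          · exact absurd h' (hxne j)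
          · exact absurd ((hsgn j).mp h') (by simpa using h)
        rw [abs_of_neg hx]; simp [hεdef, h]
    have h1 : ∑ k ∈ Finset.range n, C k * Y k = 1 := by
      rw [← hsum, ← Fin.sum_univ_eq_sum_range (fun k => C k * Y k) n,
        ← Equiv.sum_comp a (fun j => l j * x j)]
      refine Finset.sum_congr rfl fun t _ => ?_
      rw [hCdef, hYdef]
      simp only [dif_pos t.isLt, Fin.eta]
      conv_rhs => rw [hxε (a t)]
      ring
    have h2 : ∀ s : Fin n, ∑ k ∈ Finset.range (s.val + 1), C k = S s := by
      intro s
      rw [hSeq s, sum_Iic_eq_range n (fun t => ε (a t) * l (a t)) s]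
    have hYnn : ∀ k, 0 ≤ Y k := by
      intro k
      rw [hYdef]
      by_cases h : k < n <;> simp [h, abs_nonneg]
    have hdiff : ∀ s ∈ Finset.range n, 0 ≤ Y s - Y (s + 1) := by
      intro s hs
      rw [Finset.mem_range] at hs
      by_cases h : s + 1 < n
      · have := hord ⟨s, hs⟩ ⟨s + 1, h⟩ (by simp [Fin.mk_lt_mk])
        rw [hYdef]
        simp only [dif_pos hs, dif_pos h]
        linarith
      · rw [hYdef]; simp only [dif_neg h, dif_pos hs, sub_zero]
        exact abs_nonneg _
    have hYn : Y n = 0 := by rw [hYdef]; simp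
    have habel := abel_aux C Y n
    rw [h1, hYn, mul_zero, add_zero] at habel
    have hkey : cmin * Y 0 ≤ 1 := by
      calc cmin * Y 0 = cmin * (Y 0 - Y n) := by rw [hYn, sub_zero]
        _ = ∑ s ∈ Finset.range n, cmin * (Y s - Y (s + 1)) := by
            rw [← Finset.mul_sum, Finset.sum_range_sub' Y n]
        _ ≤ ∑ s ∈ Finset.range n, (∑ t ∈ Finset.range (s + 1), C t) * (Y s - Y (s + 1)) := by
            refine Finset.sum_le_sum fun s hs => ?_
            have hsn : s < n := Finset.mem_range.mp hs
            have : cmin ≤ ∑ t ∈ Finset.range (s + 1), C t := by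
              rw [show s = (⟨s, hsn⟩ : Fin n).val from rfl, h2 ⟨s, hsn⟩]
              exact hcle _
            exact mul_le_mul_of_nonneg_right this (hdiff s hs)
        _ = 1 := habel.symm
    have hY0 : Y 0 ≤ 1 / cmin := by
      rw [le_div_iff₀ hc]; linarith [hkey]
    rw [pi_norm_le_iff_of_nonneg (by positivity)]
    intro j
    have hY0eq : Y 0 = |x (a ⟨0, hn⟩)| := by rw [hYdef]; simp [hn]
    have hbound : |x j| ≤ Y 0 := by
      have hj : x j = x (a (a.symm j)) := by rw [Equiv.apply_symm_apply]
      rcases eq_or_lt_of_le (show (⟨0, hn⟩ : Fin n) ≤ a.symm j from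
        Fin.mk_le_mk.mpr (Nat.zero_le _)) with h | h
      · rw [hj, ← h, hY0eq]
      · rw [hY0eq, hj]
        exact (hord ⟨0, hn⟩ (a.symm j) h).le
    calc ‖x j‖ = |x j| := rfl
      _ ≤ Y 0 := hbound
      _ ≤ 1 / cmin := hY0
end

section
/- Let R be the region of B_n corresponding to a signed permutation ((a_1,...,a_n), σ), and P = {f(x) = 1} with f(x) = ∑ l_j x_j, l_1 ≫ ... ≫ l_n > 0. If every left-to-right minimum of (a_1,...,a_n) has negative sign, then R ∩ P is empty; and if some left-to-right minima have positive sign and others negative sign, then R ∩ P is nonempty and unbounded. -/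
/-- The region of the type-B arrangement attached to `(a, σ)`, intersected
with the hyperplane `P = {∑ lⱼ xⱼ = 1}`. -/
def regionSlice (n : ℕ) (a : Equiv.Perm (Fin n)) (σ : Fin n → Bool)
    (l : Fin n → ℝ) : Set (Fin n → ℝ) :=
  {x | (∀ i j : Fin n, i < j → |x (a j)| < |x (a i)|) ∧
    (∀ i, x i ≠ 0) ∧ (∀ i, 0 < x i ↔ σ i = true) ∧ (∑ j, l j * x j) = 1}

lemma telesc (C : ℕ → ℝ) (m n : ℕ) (h : m ≤ n) :
    ∑ k ∈ Finset.Ico m n, (C k - C (k + 1)) = C m - C n := by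
  rw [Finset.sum_Ico_eq_sum_range]
  have := Finset.sum_range_sub' (fun i => C (m + i)) (n - m)
  simp only [Nat.add_zero] at this
  rw [Nat.add_sub_cancel' h] at this
  rw [← this]
  apply Finset.sum_congr rfl
  intro i _
  congr 2

lemma swap_lemma (n : ℕ) (a : Equiv.Perm (Fin n)) (σ : Fin n → Bool) (l : Fin n → ℝ)
    (c u : Fin n → ℝ) (hcu : ∀ t, c t = ∑ s ∈ Finset.Ici t, u s) :
    ∑ j, l j * ((if σ j then (1 : ℝ) else -1) * c (a.symm j))
      = ∑ s, u s * partialSum n a σ l s := by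
  rw [← Equiv.sum_comp a (fun j => l j * ((if σ j then (1 : ℝ) else -1) * c (a.symm j)))]
  simp only [Equiv.symm_apply_apply]
  simp_rw [hcu, Finset.mul_sum]
  rw [Finset.sum_comm' (s := Finset.univ) (t := fun t => Finset.Ici t)
    (s' := fun s => Finset.Iic s) (t' := Finset.univ)
    (by intro x y; simp [Finset.mem_Ici, Finset.mem_Iic])]
  apply Finset.sum_congr rfl
  intro s _
  rw [partialSum, Finset.mul_sum]
  apply Finset.sum_congr rfl
  intro t _
  ring

lemma mem_of_u (n : ℕ) (a : Equiv.Perm (Fin n)) (σ : Fin n → Bool) (l : Fin n → ℝ)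
    (u : Fin n → ℝ) (hu : ∀ s, 0 < u s)
    (hsum : ∑ s, u s * partialSum n a σ l s = 1) :
    (fun j => (if σ j then (1 : ℝ) else -1) * ∑ s ∈ Finset.Ici (a.symm j), u s)
      ∈ regionSlice n a σ l := by
  set c : Fin n → ℝ := fun t => ∑ s ∈ Finset.Ici t, u s with hc
  have hcpos : ∀ t, 0 < c t := fun t =>
    Finset.sum_pos (fun s _ => hu s) ⟨t, Finset.mem_Ici.mpr le_rfl⟩
  set x : Fin n → ℝ := fun j => (if σ j then (1 : ℝ) else -1) * c (a.symm j) with hx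
  have habs : ∀ j, |x j| = c (a.symm j) := by
    intro j
    by_cases h : σ j <;> simp [hx, h, abs_of_pos (hcpos (a.symm j))]
  refine ⟨?_, ?_, ?_, ?_⟩
  · intro i j hij
    rw [habs, habs, Equiv.symm_apply_apply, Equiv.symm_apply_apply]
    exact Finset.sum_lt_sum_of_subset (Finset.Ici_subset_Ici.mpr hij.le)
      (Finset.mem_Ici.mpr le_rfl) (fun h => absurd (Finset.mem_Ici.mp h) (not_le.mpr hij))
      (hu i) (fun s _ _ => (hu s).le)
  · intro i
    by_cases h : σ i <;> simp [hx, h, (hcpos (a.symm i)).ne']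
  · intro i
    by_cases h : σ i <;> simp [hx, h, hcpos (a.symm i), (hcpos (a.symm i)).not_gt, le_of_lt]
  · rw [show (∑ j, l j * x j) = ∑ j, l j * ((if σ j then (1 : ℝ) else -1) * c (a.symm j))
      from rfl, swap_lemma n a σ l c u (fun t => rfl), hsum]

lemma exists_big (n : ℕ) (a : Equiv.Perm (Fin n)) (σ : Fin n → Bool) (l : Fin n → ℝ)
    (p q : Fin n) (hp : 0 < partialSum n a σ l p) (hq : partialSum n a σ l q < 0)
    (hpq : p ≠ q) (r : ℝ) : ∃ x ∈ regionSlice n a σ l, r ≤ ‖x‖ := by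
  classical
  set S : Fin n → ℝ := partialSum n a σ l with hS
  set B : ℝ := ∑ s ∈ (Finset.univ.erase p).erase q, S s with hB
  set M : ℝ := max (max r 1) ((1 - B) / S p) + 1 with hM
  have hM1 : 0 < M := by
    have : (1:ℝ) ≤ max (max r 1) ((1 - B) / S p) := le_trans (le_max_right r 1) (le_max_left _ _)
    rw [hM]; linarith
  have hMr : r ≤ M := by
    have : r ≤ max (max r 1) ((1 - B) / S p) := le_trans (le_max_left r 1) (le_max_left _ _)
    rw [hM]; linarith
  have hMB : (1 - B) / S p < M := by
    have : (1 - B) / S p ≤ max (max r 1) ((1 - B) / S p) := le_max_right _ _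
    rw [hM]; linarith
  have hnum : 1 - B - M * S p < 0 := by
    have := (div_lt_iff₀ hp).mp hMB
    linarith
  set uq : ℝ := (1 - B - M * S p) / S q with huqdef
  have huq : 0 < uq := div_pos_of_neg_of_neg hnum hq
  set u : Fin n → ℝ := fun s => if s = p then M else if s = q then uq else 1 with hu
  have hupos : ∀ s, 0 < u s := by
    intro s
    by_cases h1 : s = p
    · simpa [hu, h1] using hM1
    · by_cases h2 : s = q <;> simp [hu, h1, h2, Ne.symm hpq, huq]
  have hup : u p = M := by simp [hu]
  have huqq : u q = uq := by simp [hu, hpq.symm]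
  have hsum : ∑ s, u s * S s = 1 := by
    rw [← Finset.add_sum_erase _ _ (Finset.mem_univ p),
      ← Finset.add_sum_erase _ _ (Finset.mem_erase.mpr ⟨Ne.symm hpq, Finset.mem_univ q⟩)]
    have hrest : ∑ s ∈ (Finset.univ.erase p).erase q, u s * S s = B := by
      apply Finset.sum_congr rfl
      intro s hs
      have h2 : s ≠ q := (Finset.mem_erase.mp hs).1
      have h1 : s ≠ p := (Finset.mem_erase.mp (Finset.mem_erase.mp hs).2).1
      simp [hu, h1, h2]
    have hq0 : S q ≠ 0 := ne_of_lt hq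
    rw [hrest, hup, huqq, huqdef]
    field_simp
    ring
  refine ⟨_, mem_of_u n a σ l u hupos hsum, ?_⟩
  have h1 : u p ≤ ∑ s ∈ Finset.Ici p, u s :=
    Finset.single_le_sum (fun s _ => (hupos s).le) (Finset.mem_Ici.mpr le_rfl)
  set x : Fin n → ℝ := fun j => (if σ j then (1 : ℝ) else -1) * ∑ s ∈ Finset.Ici (a.symm j), u s
    with hxd
  have h2 : M ≤ |x (a p)| := by
    have hpos : 0 < ∑ s ∈ Finset.Ici p, u s :=
      Finset.sum_pos (fun s _ => hupos s) ⟨p, Finset.mem_Ici.mpr le_rfl⟩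
    have : |x (a p)| = ∑ s ∈ Finset.Ici p, u s := by
      by_cases h : σ (a p) <;> simp [hxd, h, abs_of_pos hpos]
    rw [this]
    calc M = u p := hup.symm
      _ ≤ _ := h1
  calc r ≤ M := hMr
    _ ≤ |x (a p)| := h2
    _ = ‖x (a p)‖ := (Real.norm_eq_abs _).symm
    _ ≤ ‖x‖ := norm_le_pi_norm x (a p)

lemma ici_eq (n : ℕ) (t : Fin n) (C : ℕ → ℝ) :
    ∑ s ∈ Finset.Ici t, (C s.val - C (s.val + 1))
      = ∑ k ∈ Finset.Ico t.val n, (C k - C (k + 1)) := by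
  refine Finset.sum_nbij' (fun s => s.val) (fun k => ⟨k % n, Nat.mod_lt _ t.pos⟩)
    ?_ ?_ ?_ ?_ ?_
  · intro s hs
    rw [Finset.mem_Ici] at hs
    simp only [Finset.mem_Ico]
    exact ⟨hs, s.isLt⟩
  · intro k hk
    rw [Finset.mem_Ico] at hk
    rw [Finset.mem_Ici, Fin.le_def]
    simp [Nat.mod_eq_of_lt hk.2, hk.1]
  · intro s _
    ext
    simp [Nat.mod_eq_of_lt s.isLt]
  · intro k hk
    rw [Finset.mem_Ico] at hk
    simp [Nat.mod_eq_of_lt hk.2]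
  · intro s hs
    rfl

/-- If every left-to-right minimum of `(a, σ)` has negative sign then `R ∩ P`
is empty, and if some left-to-right minima are positive and others negative
then `R ∩ P` is nonempty and unbounded (with the genericity encoded as: each
partial sum `f(vᵢ)` has the sign of `σ(min(a₁,…,aᵢ))`). -/
theorem region_inter_empty_or_unbounded (n : ℕ) (a : Equiv.Perm (Fin n))
    (σ : Fin n → Bool) (l : Fin n → ℝ) (hl : ∀ j, 0 < l j)
    (hgen : ∀ i : Fin n, if σ (minUpTo n a i) = true
      then 0 < partialSum n a σ l i else partialSum n a σ l i < 0) :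
    ((∀ i : Fin n, σ (minUpTo n a i) = false) → regionSlice n a σ l = ∅) ∧
    (((∃ i : Fin n, σ (minUpTo n a i) = true) ∧
        (∃ i : Fin n, σ (minUpTo n a i) = false)) →
      (regionSlice n a σ l).Nonempty ∧
        ¬ Bornology.IsBounded (regionSlice n a σ l)) := by
  constructor
  · intro hneg
    rw [Set.eq_empty_iff_forall_notMem]
    intro x hx
    obtain ⟨hdec, hne, hsgn, hsum1⟩ := hx
    have hS : ∀ i, partialSum n a σ l i < 0 := fun i => by simpa [hneg i] using hgen i
    set C : ℕ → ℝ := fun k => if h : k < n then |x (a ⟨k, h⟩)| else 0 with hC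
    set u : Fin n → ℝ := fun s => C s.val - C (s.val + 1) with hudef
    have hCs : ∀ s : Fin n, C s.val = |x (a s)| := by
      intro s
      simp [hC, s.isLt]
    have hu0 : ∀ s, 0 ≤ u s := by
      intro s
      rw [hudef]
      dsimp only
      by_cases h : s.val + 1 < n
      · have hlt := hdec s ⟨s.val + 1, h⟩ (by simp [Fin.lt_def])
        rw [hCs s]
        simp only [hC]
        rw [dif_pos h]
        linarith
      · rw [hCs s]
        simp only [hC]
        rw [dif_neg h]
        simp [abs_nonneg]
    have hcu : ∀ t : Fin n, |x (a t)| = ∑ s ∈ Finset.Ici t, u s := by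
      intro t
      rw [show (∑ s ∈ Finset.Ici t, u s)
          = ∑ k ∈ Finset.Ico t.val n, (C k - C (k + 1)) from ici_eq n t C,
        telesc C t.val n t.isLt.le]
      have hn : C n = 0 := by simp [hC]
      rw [hn, sub_zero, hCs t]
    have hxj : ∀ j, x j = (if σ j then (1 : ℝ) else -1) * |x j| := by
      intro j
      by_cases h : σ j
      · rw [abs_of_pos ((hsgn j).mpr h)]
        simp [h]
      · have hle : x j ≤ 0 := by
          by_contra hc
          exact h ((hsgn j).mp (lt_of_not_ge hc))
        have hneg' : x j < 0 := lt_of_le_of_ne hle (hne j)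
        rw [abs_of_neg hneg']
        simp [h]
    have key : ∑ j, l j * x j = ∑ s, u s * partialSum n a σ l s := by
      rw [← swap_lemma n a σ l (fun t => |x (a t)|) u hcu]
      apply Finset.sum_congr rfl
      intro j _
      simp only [Equiv.apply_symm_apply]
      rw [← hxj j]
    rw [hsum1] at key
    have h2 : ∑ s, u s * partialSum n a σ l s ≤ 0 :=
      Finset.sum_nonpos fun s _ => mul_nonpos_of_nonneg_of_nonpos (hu0 s) (hS s).le
    linarith
  · rintro ⟨⟨p, hp⟩, ⟨q, hq⟩⟩
    have hp' : 0 < partialSum n a σ l p := by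
      have := hgen p
      rw [hp] at this
      simpa using this
    have hq' : partialSum n a σ l q < 0 := by
      have := hgen q
      rw [hq] at this
      simpa using this
    have hpq : p ≠ q := by
      intro h
      rw [h, hq] at hp
      cases hp
    constructor
    · obtain ⟨x, hx, _⟩ := exists_big n a σ l p q hp' hq' hpq 0
      exact ⟨x, hx⟩
    · intro hb
      rw [isBounded_iff_forall_norm_le] at hb
      obtain ⟨Cb, hCb⟩ := hb
      obtain ⟨x, hx, hxn⟩ := exists_big n a σ l p q hp' hq' hpq (Cb + 1)
      have := hCb x hx
      linarith
end
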